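/- arXiv:2512.14852 — 9 statements merged into one kernel-verified Lean document; each statement's English description precedes it below -/
import Mathlib

section
/- With the notation of the paratrophic setup: if the matrix P(σ,α) is invertible, then |J_ε| = |J_σ|, the submatrix P(σ,α)_{J_ε,J_σ} (rows in J_ε, columns in J_σ) is invertible, and for every g ∈ G the matrix C_g has rank |J_g|. -/
/-!
Since `e_i e_j` is homogeneous of degree `deg i * deg j`, the entry `P i j` vanishes unless
`deg i * deg j = σ`. Hence for every factorization `h * g = σ` the matrix `P` maps the
coordinates `J_g` into `J_h` and the rest into the rest; the inverse of `P` respects the same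
splitting, so the block `P_{J_h, J_g}` is invertible. For `h = ε` this is the second claim and
gives `|J_ε| = |J_σ|`. For `h = σ g⁻¹` the block factors as `L * C_g` with
`L r (r', ℓ) = δ_{r r'} α_ℓ`, so `C_g` has a left inverse and full column rank.
-/

open Finset

namespace Matrix

section BlockPattern

variable {m n R : Type*} [Fintype n] [DecidableEq m] [Semiring R]
  {p : m → Prop} {q : n → Prop} [DecidablePred q]

/-- A block pattern is the commutation relation `Dₚ * P = P * D_q` with the diagonal indicator
matrices of `p` and `q`, so it passes to a two-sided inverse. -/
theorem block_pattern_of_mul_eq_one [Fintype m] [DecidableEq n] [DecidablePred p]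
    {P : Matrix m n R} {Q : Matrix n m R} (hPQ : P * Q = 1) (hQP : Q * P = 1)
    (hP : ∀ i j, P i j ≠ 0 → (p i ↔ q j)) (j : n) (i : m) (hQ : Q j i ≠ 0) :
    q j ↔ p i := by
  have : Nontrivial R := nontrivial_of_ne _ _ hQ
  set Dp : Matrix m m R := diagonal fun i => if p i then 1 else 0
  set Dq : Matrix n n R := diagonal fun j => if q j then 1 else 0
  have hPD : Dp * P = P * Dq := by
    ext i j
    rw [diagonal_mul, mul_diagonal]
    by_cases h : P i j = 0
    · simp [h]
    · simp [hP i j h]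
  have hQD : Q * Dp = Dq * Q := calc
    Q * Dp = Q * Dp * (P * Q) := by rw [hPQ, Matrix.mul_one]
    _ = Q * (Dp * P) * Q := by simp only [Matrix.mul_assoc]
    _ = (Q * P) * Dq * Q := by rw [hPD]; simp only [Matrix.mul_assoc]
    _ = Dq * Q := by rw [hQP, Matrix.one_mul]
  have hji := congr_fun₂ hQD j i
  rw [mul_diagonal, diagonal_mul] at hji
  by_cases hpi : p i <;> by_cases hqj : q j <;> simp_all

theorem submatrix_mul_submatrix_eq_one {P : Matrix m n R} {Q : Matrix n m R} (hPQ : P * Q = 1)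
    (hP : ∀ i j, p i → P i j ≠ 0 → q j) :
    P.submatrix ((↑) : {i // p i} → m) ((↑) : {j // q j} → n) *
      Q.submatrix ((↑) : {j // q j} → n) ((↑) : {i // p i} → m) = 1 := by
  rw [← submatrix_one _ Subtype.val_injective, ← hPQ]
  ext i i'
  have hzero : ∑ j : {j // ¬q j}, P i.1 j.1 * Q j.1 i'.1 = 0 :=
    sum_eq_zero fun j _ => by rw [not_not.mp (mt (hP i.1 j.1 i.2) j.2), zero_mul]
  rw [submatrix_apply, mul_apply, mul_apply, ← Fintype.sum_subtype_add_sum_subtype q, hzero,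
    add_zero]
  rfl

theorem submatrix_mul_submatrix_eq_one_and [Fintype m] [DecidableEq n] [DecidablePred p]
    {P : Matrix m n R} {Q : Matrix n m R} (hPQ : P * Q = 1) (hQP : Q * P = 1)
    (hP : ∀ i j, P i j ≠ 0 → (p i ↔ q j)) :
    P.submatrix ((↑) : {i // p i} → m) ((↑) : {j // q j} → n) *
        Q.submatrix ((↑) : {j // q j} → n) ((↑) : {i // p i} → m) = 1 ∧
      Q.submatrix ((↑) : {j // q j} → n) ((↑) : {i // p i} → m) *
        P.submatrix ((↑) : {i // p i} → m) ((↑) : {j // q j} → n) = 1 :=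
  ⟨submatrix_mul_submatrix_eq_one hPQ fun i j hi hij => (hP i j hij).1 hi,
    submatrix_mul_submatrix_eq_one hQP fun j i hj hji =>
      (block_pattern_of_mul_eq_one hPQ hQP hP j i hji).1 hj⟩

end BlockPattern

theorem rank_eq_card_width_of_mul_eq_one {m n R : Type*} [Fintype m] [Fintype n] [DecidableEq n]
    [CommSemiring R] [StrongRankCondition R] {X : Matrix n m R} {C : Matrix m n R}
    (h : X * C = 1) : C.rank = Fintype.card n :=
  le_antisymm C.rank_le_card_width <| by
    simpa only [h, rank_one] using rank_mul_le_right X C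

theorem of_sum_mul_eq_mul {m n ι R : Type*} [Fintype m] [Fintype ι] [DecidableEq m] [Semiring R]
    (α : ι → R) (c : m → n → ι → R) :
    of (fun r j => ∑ ℓ, α ℓ * c r j ℓ) =
      of (fun r (p : m × ι) => if p.1 = r then α p.2 else 0) *
        of fun (p : m × ι) (j : n) => c p.1 j p.2 := by
  ext r j
  rw [mul_apply, Fintype.sum_prod_type, sum_eq_single r]
  · simp
  · intro r' _ hr'
    simp [hr']
  · simp

end Matrix

section Graded

variable {K G A J : Type*} [CommSemiring K] [Mul G] [Semiring A] [Algebra K A]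
  {𝒜 : G → Submodule K A} {deg : J → G} {e : Module.Basis J K A}

theorem deg_eq_mul_of_repr_mul_ne_zero
    (h_mul : ∀ {g h : G} {a b : A}, a ∈ 𝒜 g → b ∈ 𝒜 h → a * b ∈ 𝒜 (g * h))
    (h𝒜 : ∀ g : G, 𝒜 g = Submodule.span K (e '' {i | deg i = g})) {i j ℓ : J}
    (h : e.repr (e i * e j) ℓ ≠ 0) : deg ℓ = deg i * deg j := by
  have he : ∀ k, e k ∈ 𝒜 (deg k) := fun k =>
    h𝒜 _ ▸ Submodule.subset_span ⟨k, rfl, rfl⟩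
  have hmem := h_mul (he i) (he j)
  rw [h𝒜, Module.Basis.mem_span_image] at hmem
  exact hmem (Finsupp.mem_support_iff.2 h)

end Graded

section Paratrophic

variable {K G J : Type*} [Semiring K] [Fintype J] {deg : J → G} {σ : G} {α : J → K}
  {c : J → J → J → K} {P : Matrix J J K}

theorem mul_deg_eq_of_paratrophic_ne_zero [Mul G] [DecidableEq G]
    (hc : ∀ i j ℓ, c i j ℓ ≠ 0 → deg ℓ = deg i * deg j)
    (hP : ∀ i j, P i j = ∑ ℓ ∈ univ.filter (fun ℓ => deg ℓ = σ), α ℓ * c i j ℓ)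
    {i j : J} (h : P i j ≠ 0) : deg i * deg j = σ := by
  obtain ⟨ℓ, hℓ, hαc⟩ := exists_ne_zero_of_sum_ne_zero (hP i j ▸ h)
  exact (hc i j ℓ (right_ne_zero_of_mul hαc)).symm.trans (mem_filter.1 hℓ).2

theorem deg_eq_iff_of_paratrophic_ne_zero [Group G] [DecidableEq G]
    (hc : ∀ i j ℓ, c i j ℓ ≠ 0 → deg ℓ = deg i * deg j)
    (hP : ∀ i j, P i j = ∑ ℓ ∈ univ.filter (fun ℓ => deg ℓ = σ), α ℓ * c i j ℓ)
    {h g : G} (hhg : h * g = σ) {i j : J} (hij : P i j ≠ 0) : deg i = h ↔ deg j = g := by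
  have hdeg : deg i * deg j = h * g :=
    (mul_deg_eq_of_paratrophic_ne_zero hc hP hij).trans hhg.symm
  constructor
  · rintro rfl
    exact mul_left_cancel hdeg
  · rintro rfl
    exact mul_right_cancel hdeg

theorem paratrophic_submatrix_eq [DecidableEq G]
    (hP : ∀ i j, P i j = ∑ ℓ ∈ univ.filter (fun ℓ => deg ℓ = σ), α ℓ * c i j ℓ)
    (rows cols : J → Prop) :
    P.submatrix ((↑) : {r // rows r} → J) ((↑) : {j // cols j} → J) =
      Matrix.of fun r j => ∑ ℓ : {ℓ // deg ℓ = σ}, α ℓ.1 * c r.1 j.1 ℓ.1 := by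
  ext r j
  rw [Matrix.submatrix_apply, hP,
    sum_subtype _ fun ℓ => mem_filter.trans (and_iff_right (mem_univ ℓ))]
  rfl

end Paratrophic

theorem stmt1_general (K : Type) [Field K] (G : Type) [Group G] [DecidableEq G]
    (A : Type) [Ring A] [Algebra K A] (𝒜 : G → Submodule K A)
    (h_mul : ∀ {g h : G} {a b : A}, a ∈ 𝒜 g → b ∈ 𝒜 h → a * b ∈ 𝒜 (g * h))
    (J : Type) [Fintype J] [DecidableEq J]
    (deg : J → G) (e : Module.Basis J K A)
    (h𝒜 : ∀ g : G, 𝒜 g = Submodule.span K (e '' {i | deg i = g}))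
    (σ : G) (α : J → K)
    (c : J → J → J → K) (hc : ∀ i j ℓ, c i j ℓ = e.repr (e i * e j) ℓ)
    (P : Matrix J J K)
    (hP : ∀ i j, P i j = ∑ ℓ ∈ univ.filter (fun ℓ => deg ℓ = σ), α ℓ * c i j ℓ)
    (hinv : IsUnit P) :
    Fintype.card {i : J // deg i = (1 : G)} = Fintype.card {i : J // deg i = σ} ∧
    (∃ N : Matrix {j : J // deg j = σ} {i : J // deg i = (1 : G)} K,
        (Matrix.of fun (i : {i : J // deg i = (1 : G)}) (j : {j : J // deg j = σ}) =>
          P i.1 j.1) * N = 1 ∧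
        N * (Matrix.of fun (i : {i : J // deg i = (1 : G)}) (j : {j : J // deg j = σ}) =>
          P i.1 j.1) = 1) ∧
    (∀ g : G,
      (Matrix.of fun (p : {r : J // deg r = σ * g⁻¹} × {ℓ : J // deg ℓ = σ})
          (j : {j : J // deg j = g}) => c p.1.1 j.1 p.2.1).rank
        = Fintype.card {j : J // deg j = g}) := by
  obtain ⟨u, rfl⟩ := hinv
  have hc_supp : ∀ i j ℓ, c i j ℓ ≠ 0 → deg ℓ = deg i * deg j := fun i j ℓ h =>
    deg_eq_mul_of_repr_mul_ne_zero h_mul h𝒜 (hc i j ℓ ▸ h)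
  have blocks_inv : ∀ h g : G, h * g = σ → _ := fun h g hhg =>
    Matrix.submatrix_mul_submatrix_eq_one_and u.mul_inv u.inv_mul
      fun i j => deg_eq_iff_of_paratrophic_ne_zero (h := h) (g := g) hc_supp hP hhg
  obtain ⟨hPN, hNP⟩ := blocks_inv 1 σ (one_mul σ)
  refine ⟨Matrix.square_of_invertible _ _ hPN hNP, ⟨_, hPN, hNP⟩, fun g => ?_⟩
  obtain ⟨-, hNP⟩ := blocks_inv (σ * g⁻¹) g (inv_mul_cancel_right σ g)
  rw [paratrophic_submatrix_eq hP, Matrix.of_sum_mul_eq_mul, ← Matrix.mul_assoc] at hNP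
  exact Matrix.rank_eq_card_width_of_mul_eq_one hNP

/-- **Theorem A, (1) ⟹ (2).**  If the σ-paratrophic matrix `P(σ,α)` is invertible, then
`|J_ε| = |J_σ|`, the submatrix `P(σ,α)_{J_ε,J_σ}` is invertible, and for every `g ∈ G`
the matrix `C_g` (with rows indexed by `J_{σg⁻¹} × J_σ`, columns by `J_g`, entry
`c_{rjℓ}` in row `(r,ℓ)`, column `j`) has rank `|J_g|`. -/
theorem stmt1 (K : Type) [Field K] (G : Type) [Group G] [DecidableEq G]
    (A : Type) [Ring A] [Algebra K A] (𝒜 : G → Submodule K A)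
    (h_one : (1 : A) ∈ 𝒜 1)
    (h_mul : ∀ {g h : G} {a b : A}, a ∈ 𝒜 g → b ∈ 𝒜 h → a * b ∈ 𝒜 (g * h))
    (J : Type) [Fintype J] [DecidableEq J]
    (deg : J → G) (e : Module.Basis J K A)
    (h𝒜 : ∀ g : G, 𝒜 g = Submodule.span K (e '' {i | deg i = g}))
    (σ : G) (α : J → K)
    (c : J → J → J → K) (hc : ∀ i j ℓ, c i j ℓ = e.repr (e i * e j) ℓ)
    (P : Matrix J J K)
    (hP : ∀ i j, P i j = ∑ ℓ ∈ univ.filter (fun ℓ => deg ℓ = σ), α ℓ * c i j ℓ)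
    (hinv : IsUnit P) :
    Fintype.card {i : J // deg i = (1 : G)} = Fintype.card {i : J // deg i = σ} ∧
    (∃ N : Matrix {j : J // deg j = σ} {i : J // deg i = (1 : G)} K,
        (Matrix.of fun (i : {i : J // deg i = (1 : G)}) (j : {j : J // deg j = σ}) =>
          P i.1 j.1) * N = 1 ∧
        N * (Matrix.of fun (i : {i : J // deg i = (1 : G)}) (j : {j : J // deg j = σ}) =>
          P i.1 j.1) = 1) ∧
    (∀ g : G,
      (Matrix.of fun (p : {r : J // deg r = σ * g⁻¹} × {ℓ : J // deg ℓ = σ})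
          (j : {j : J // deg j = g}) => c p.1.1 j.1 p.2.1).rank
        = Fintype.card {j : J // deg j = g}) :=
  stmt1_general K G A 𝒜 h_mul J deg e h𝒜 σ α c hc P hP hinv
end

section
/- With the notation of the paratrophic setup: if |J_ε| = |J_σ|, the submatrix P(σ,α)_{J_ε,J_σ} is invertible, and rank C_g = |J_g| for all g ∈ G, then for every g ∈ G one has |J_{σg^{-1}}| = |J_g| and the submatrix P(σ,α)_{J_{σg^{-1}},J_g} is invertible. -/
/-!
Put `φ = Σ_{ℓ ∈ J_σ} α_ℓ e_ℓ^*`, so that `P i j = φ (e i * e j)`. If `v` lies in the kernel of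
the block `P_{J_{σg⁻¹}, J_g}` and `b = Σ v_j e_j ∈ A_g`, then `φ (e_r b) = 0` for `r ∈ J_{σg⁻¹}`.
For such `r` we have `e_r b ∈ A_σ`, and `e_u e_r ∈ A_{σg⁻¹}` for `u ∈ J_ε`, so
`φ (e_u (e_r b)) = 0`; the invertible `(ε, σ)` block forces `e_r b = 0`. These equations say
`C_g v = 0`, so `v = 0` by the rank hypothesis. Hence `|J_g| ≤ |J_{σg⁻¹}|` for all `g`; since
`g ↦ σg⁻¹` is a bijection of `G` and `Σ_g |J_g| = |J|` is finite, all these inequalities are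
equalities, and an injective square block is invertible.
-/

open Finset
open scoped Matrix

theorem Function.comp_equiv_eq_of_le_of_finite_support {α M : Type*} [AddCommMonoid M]
    [PartialOrder M] [IsOrderedCancelAddMonoid M] (τ : α ≃ α) {d : α → M}
    (hd : (Function.support d).Finite) (hle : ∀ a, d a ≤ d (τ a)) (a : α) :
    d (τ a) = d a := by
  have hdτ : (Function.support (d ∘ τ)).Finite := by
    rw [Function.support_comp_eq_preimage]
    exact hd.preimage τ.injective.injOn
  set s := (hd.union hdτ).toFinset
  have hsum : ∑ b ∈ s, d b = ∑ b ∈ s, d (τ b) := by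
    rw [← finsum_eq_sum_of_support_subset d (by simp [s]),
      ← finsum_eq_sum_of_support_subset (fun b => d (τ b)) (by intro; simp_all [s]),
      finsum_comp_equiv]
  by_cases ha : a ∈ s
  · exact ((Finset.sum_eq_sum_iff_of_le fun b _ => hle b).1 hsum a ha).symm
  · simp only [s, Set.Finite.mem_toFinset, Set.mem_union, Function.mem_support, not_or,
      not_not] at ha
    exact ha.2.trans ha.1.symm

namespace Matrix

variable {m n K : Type*} [Fintype n] [Field K]

theorem mulVec_injective_of_rank_eq_card {M : Matrix m n K} (h : M.rank = Fintype.card n) :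
    Function.Injective M.mulVec :=
  mulVec_injective_iff.2 (linearIndependent_iff_card_eq_finrank_span.2 (by
    rw [Set.finrank, ← rank_eq_finrank_span_cols, h]))

theorem mulVec_injective_of_mul_eq_one [Fintype m] [DecidableEq n] {M : Matrix m n K}
    {N : Matrix n m K} (h : N * M = 1) : Function.Injective M.mulVec := fun v w hvw => by
  simpa [mulVec_mulVec, h] using congrArg (N *ᵥ ·) hvw

theorem exists_mul_eq_one_and_mul_eq_one_of_mulVec_injective [Fintype m] [DecidableEq m]
    [DecidableEq n] {M : Matrix m n K} (hM : Function.Injective M.mulVec)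
    (hcard : Fintype.card m = Fintype.card n) : ∃ N : Matrix n m K, M * N = 1 ∧ N * M = 1 := by
  let E := M.mulVecLin.linearEquivOfInjective hM (by simp [hcard])
  refine ⟨LinearMap.toMatrix' E.symm.toLinearMap, toLin'.injective ?_, toLin'.injective ?_⟩
  · refine LinearMap.ext fun v => ?_
    simp only [toLin'_mul, toLin'_toMatrix', LinearMap.comp_apply, toLin'_one,
      LinearMap.id_apply, LinearEquiv.coe_coe]
    exact E.apply_symm_apply v
  · refine LinearMap.ext fun v => ?_
    simp only [toLin'_mul, toLin'_toMatrix', LinearMap.comp_apply, toLin'_one,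
      LinearMap.id_apply, LinearEquiv.coe_coe]
    exact E.symm_apply_apply v

theorem of_apply_mul_mulVec {ι κ R A : Type*} [Fintype κ] [CommSemiring R] [Semiring A]
    [Algebra R A] (f : ι → A →ₗ[R] R) (x : ι → A) (y : κ → A) (v : κ → R) :
    (of fun i j => f i (x i * y j)) *ᵥ v = fun i => f i (x i * ∑ j, v j • y j) := by
  ext i
  simp [mulVec, dotProduct, Finset.mul_sum, mul_comm]

end Matrix

section HomogeneousBasis

variable {K A G J : Type*} [Field K] [Ring A] [Algebra K A]
  {𝒜 : G → Submodule K A} {deg : J → G} {e : Module.Basis J K A}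

/-- The block `P(σ,α)_{J_k, J_g}` when `φ = Σ_{ℓ ∈ J_σ} α_ℓ e_ℓ^*`. -/
noncomputable def gramBlock (φ : A →ₗ[K] K) (e : Module.Basis J K A) (deg : J → G) (k g : G) :
    Matrix {r // deg r = k} {j // deg j = g} K :=
  Matrix.of fun r j => φ (e r * e j)

theorem basis_mem_of_eq_span (h𝒜 : ∀ g, 𝒜 g = Submodule.span K (e '' {i | deg i = g}))
    (i : J) : e i ∈ 𝒜 (deg i) := by
  rw [h𝒜]
  exact Submodule.subset_span ⟨i, rfl, rfl⟩

variable [Fintype J] [DecidableEq G]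

theorem gramBlock_mulVec (φ : A →ₗ[K] K) (k g : G) (v : {j // deg j = g} → K) :
    gramBlock φ e deg k g *ᵥ v = fun r : {r // deg r = k} => φ (e r * ∑ j, v j • e j) :=
  Matrix.of_apply_mul_mulVec (fun _ => φ) _ _ v

theorem sum_repr_smul_of_mem_of_eq_span
    (h𝒜 : ∀ g, 𝒜 g = Submodule.span K (e '' {i | deg i = g})) {g : G} {a : A} (ha : a ∈ 𝒜 g) :
    ∑ j : {j // deg j = g}, e.repr a j • e j = a := by
  rw [h𝒜, Module.Basis.mem_span_image] at ha
  conv_rhs => rw [← e.sum_repr a]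
  rw [← Finset.sum_filter_of_ne (p := fun j => deg j = g) fun j _ hj =>
    ha (Finsupp.mem_support_iff.2 (left_ne_zero_of_smul hj))]
  symm
  apply Finset.sum_subtype
  simp

theorem eq_zero_of_forall_apply_basis_mul_eq_zero
    (h𝒜 : ∀ g, 𝒜 g = Submodule.span K (e '' {i | deg i = g})) {φ : A →ₗ[K] K} {k g : G}
    (hφ : Function.Injective (gramBlock φ e deg k g).mulVec) {a : A} (ha : a ∈ 𝒜 g)
    (ha₀ : ∀ r, deg r = k → φ (e r * a) = 0) : a = 0 := by
  have hcoords : (fun j : {j // deg j = g} => e.repr a j) = 0 := hφ <| by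
    rw [gramBlock_mulVec, sum_repr_smul_of_mem_of_eq_span h𝒜 ha, Matrix.mulVec_zero]
    exact funext fun r => ha₀ r r.2
  rw [← sum_repr_smul_of_mem_of_eq_span h𝒜 ha]
  simp [congrFun hcoords]

variable [Group G]

theorem basis_mul_eq_zero_of_forall_apply_basis_mul_eq_zero
    (h𝒜 : ∀ g, 𝒜 g = Submodule.span K (e '' {i | deg i = g}))
    (h_mul : ∀ {g h : G} {a b : A}, a ∈ 𝒜 g → b ∈ 𝒜 h → a * b ∈ 𝒜 (g * h))
    {φ : A →ₗ[K] K} {σ g : G} (hφ : Function.Injective (gramBlock φ e deg 1 σ).mulVec)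
    {b : A} (hb : b ∈ 𝒜 g) (hb₀ : ∀ r, deg r = σ * g⁻¹ → φ (e r * b) = 0) {r : J}
    (hr : deg r = σ * g⁻¹) :
    e r * b = 0 := by
  have hφs : ∀ a ∈ 𝒜 (σ * g⁻¹), φ (a * b) = 0 := fun a ha => by
    rw [← sum_repr_smul_of_mem_of_eq_span h𝒜 ha, Finset.sum_mul, map_sum]
    exact Finset.sum_eq_zero fun r' _ => by rw [smul_mul_assoc, map_smul, hb₀ r' r'.2, smul_zero]
  refine eq_zero_of_forall_apply_basis_mul_eq_zero h𝒜 hφ ?_ fun u hu => ?_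
  · simpa [hr] using h_mul (basis_mem_of_eq_span h𝒜 r) hb
  · rw [← mul_assoc]
    exact hφs _ <| by
      simpa [hu, hr] using h_mul (basis_mem_of_eq_span h𝒜 u) (basis_mem_of_eq_span h𝒜 r)

theorem gramBlock_mulVec_injective
    (h𝒜 : ∀ g, 𝒜 g = Submodule.span K (e '' {i | deg i = g}))
    (h_mul : ∀ {g h : G} {a b : A}, a ∈ 𝒜 g → b ∈ 𝒜 h → a * b ∈ 𝒜 (g * h))
    {φ : A →ₗ[K] K} {σ g : G} (hφ : Function.Injective (gramBlock φ e deg 1 σ).mulVec)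
    (hC : Function.Injective (Matrix.of fun (p : {r // deg r = σ * g⁻¹} × {ℓ // deg ℓ = σ})
      (j : {j // deg j = g}) => e.repr (e p.1 * e j) p.2).mulVec) :
    Function.Injective (gramBlock φ e deg (σ * g⁻¹) g).mulVec := by
  refine LinearMap.ker_eq_bot.1 (Matrix.ker_mulVecLin_eq_bot_iff.2 fun v hv => hC ?_)
  set b := ∑ j, v j • e j
  have hb : b ∈ 𝒜 g :=
    Submodule.sum_mem _ fun j _ => Submodule.smul_mem _ _ (by
      simpa only [j.2] using basis_mem_of_eq_span h𝒜 j.1)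
  have hb₀ : ∀ r, deg r = σ * g⁻¹ → e r * b = 0 :=
    fun r => basis_mul_eq_zero_of_forall_apply_basis_mul_eq_zero h𝒜 h_mul hφ hb
      fun r hr => by simpa [gramBlock_mulVec] using congrFun hv ⟨r, hr⟩
  have hCv := Matrix.of_apply_mul_mulVec
    (fun p : {r // deg r = σ * g⁻¹} × {ℓ // deg ℓ = σ} => e.coord p.2) (fun p => e p.1)
    (fun j : {j // deg j = g} => e j) v
  simp only [Module.Basis.coord_apply] at hCv
  rw [hCv, Matrix.mulVec_zero]
  funext p
  change e.repr (e p.1 * b) p.2 = 0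
  rw [hb₀ p.1 p.1.2, map_zero, Finsupp.zero_apply]

end HomogeneousBasis

theorem stmt2_general (K : Type) [Field K] (G : Type) [Group G] [DecidableEq G]
    (A : Type) [Ring A] [Algebra K A] (𝒜 : G → Submodule K A)
    (h_mul : ∀ {g h : G} {a b : A}, a ∈ 𝒜 g → b ∈ 𝒜 h → a * b ∈ 𝒜 (g * h))
    (J : Type) [Fintype J] [DecidableEq J]
    (deg : J → G) (e : Module.Basis J K A)
    (h𝒜 : ∀ g : G, 𝒜 g = Submodule.span K (e '' {i | deg i = g}))
    (σ : G) (α : J → K)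
    (c : J → J → J → K) (hc : ∀ i j ℓ, c i j ℓ = e.repr (e i * e j) ℓ)
    (P : Matrix J J K)
    (hP : ∀ i j, P i j = ∑ ℓ ∈ univ.filter (fun ℓ => deg ℓ = σ), α ℓ * c i j ℓ)
    (hsub : ∃ N : Matrix {j : J // deg j = σ} {i : J // deg i = (1 : G)} K,
        (Matrix.of fun (i : {i : J // deg i = (1 : G)}) (j : {j : J // deg j = σ}) =>
          P i.1 j.1) * N = 1 ∧
        N * (Matrix.of fun (i : {i : J // deg i = (1 : G)}) (j : {j : J // deg j = σ}) =>
          P i.1 j.1) = 1)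
    (hrank : ∀ g : G,
      (Matrix.of fun (p : {r : J // deg r = σ * g⁻¹} × {ℓ : J // deg ℓ = σ})
          (j : {j : J // deg j = g}) => c p.1.1 j.1 p.2.1).rank
        = Fintype.card {j : J // deg j = g}) :
    ∀ g : G,
      Fintype.card {r : J // deg r = σ * g⁻¹} = Fintype.card {j : J // deg j = g} ∧
      (∃ N : Matrix {j : J // deg j = g} {r : J // deg r = σ * g⁻¹} K,
        (Matrix.of fun (r : {r : J // deg r = σ * g⁻¹}) (j : {j : J // deg j = g}) =>
          P r.1 j.1) * N = 1 ∧
        N * (Matrix.of fun (r : {r : J // deg r = σ * g⁻¹}) (j : {j : J // deg j = g}) =>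
          P r.1 j.1) = 1) := by
  obtain ⟨N₀, -, hN₀⟩ := hsub
  set φ : A →ₗ[K] K := ∑ ℓ ∈ univ.filter (fun ℓ => deg ℓ = σ), α ℓ • e.coord ℓ
  have hPφ : ∀ k g : G, (Matrix.of fun (r : {r : J // deg r = k}) (j : {j : J // deg j = g}) =>
      P r.1 j.1) = gramBlock φ e deg k g := fun k g => by
    ext r j
    simp [gramBlock, φ, hP, hc]
  have hinj : ∀ g, Function.Injective (gramBlock φ e deg (σ * g⁻¹) g).mulVec := fun g =>
    gramBlock_mulVec_injective h𝒜 h_mul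
      (by rw [← hPφ]; exact Matrix.mulVec_injective_of_mul_eq_one hN₀)
      (Matrix.mulVec_injective_of_rank_eq_card (by simpa [hc] using hrank g))
  have hcard : ∀ g,
      Fintype.card {r : J // deg r = σ * g⁻¹} = Fintype.card {j : J // deg j = g} :=
    Function.comp_equiv_eq_of_le_of_finite_support ((Equiv.inv G).trans (Equiv.mulLeft σ))
      (d := fun g => Fintype.card {j : J // deg j = g})
      ((Set.finite_range deg).subset fun g hg => by simpa [Fintype.card_eq_zero_iff] using hg)
      fun g => card_le_of_injective K (gramBlock φ e deg (σ * g⁻¹) g).mulVecLin (hinj g)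
  intro g
  rw [hPφ]
  exact ⟨hcard g, Matrix.exists_mul_eq_one_and_mul_eq_one_of_mulVec_injective (hinj g) (hcard g)⟩

/-- **Theorem A, (2) ⟹ (3).**  If `|J_ε| = |J_σ|`, the submatrix `P(σ,α)_{J_ε,J_σ}` is
invertible, and `rank C_g = |J_g|` for all `g ∈ G`, then for every `g ∈ G` one has
`|J_{σg⁻¹}| = |J_g|` and the submatrix `P(σ,α)_{J_{σg⁻¹},J_g}` is invertible. -/
theorem stmt2 (K : Type) [Field K] (G : Type) [Group G] [DecidableEq G]
    (A : Type) [Ring A] [Algebra K A] (𝒜 : G → Submodule K A)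
    (h_one : (1 : A) ∈ 𝒜 1)
    (h_mul : ∀ {g h : G} {a b : A}, a ∈ 𝒜 g → b ∈ 𝒜 h → a * b ∈ 𝒜 (g * h))
    (J : Type) [Fintype J] [DecidableEq J]
    (deg : J → G) (e : Module.Basis J K A)
    (h𝒜 : ∀ g : G, 𝒜 g = Submodule.span K (e '' {i | deg i = g}))
    (σ : G) (α : J → K)
    (c : J → J → J → K) (hc : ∀ i j ℓ, c i j ℓ = e.repr (e i * e j) ℓ)
    (P : Matrix J J K)
    (hP : ∀ i j, P i j = ∑ ℓ ∈ univ.filter (fun ℓ => deg ℓ = σ), α ℓ * c i j ℓ)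
    (hcard : Fintype.card {i : J // deg i = (1 : G)} = Fintype.card {i : J // deg i = σ})
    (hsub : ∃ N : Matrix {j : J // deg j = σ} {i : J // deg i = (1 : G)} K,
        (Matrix.of fun (i : {i : J // deg i = (1 : G)}) (j : {j : J // deg j = σ}) =>
          P i.1 j.1) * N = 1 ∧
        N * (Matrix.of fun (i : {i : J // deg i = (1 : G)}) (j : {j : J // deg j = σ}) =>
          P i.1 j.1) = 1)
    (hrank : ∀ g : G,
      (Matrix.of fun (p : {r : J // deg r = σ * g⁻¹} × {ℓ : J // deg ℓ = σ})
          (j : {j : J // deg j = g}) => c p.1.1 j.1 p.2.1).rank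
        = Fintype.card {j : J // deg j = g}) :
    ∀ g : G,
      Fintype.card {r : J // deg r = σ * g⁻¹} = Fintype.card {j : J // deg j = g} ∧
      (∃ N : Matrix {j : J // deg j = g} {r : J // deg r = σ * g⁻¹} K,
        (Matrix.of fun (r : {r : J // deg r = σ * g⁻¹}) (j : {j : J // deg j = g}) =>
          P r.1 j.1) * N = 1 ∧
        N * (Matrix.of fun (r : {r : J // deg r = σ * g⁻¹}) (j : {j : J // deg j = g}) =>
          P r.1 j.1) = 1) :=
  stmt2_general K G A 𝒜 h_mul J deg e h𝒜 σ α c hc P hP hsub hrank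
end

section
/- A finite-dimensional G-graded K-algebra A is σ-graded Frobenius (i.e., A* ≅ A(σ) as graded left A-modules) if and only if there exists a family of scalars α = (α_ℓ)_{ℓ∈J_σ} such that the σ-paratrophic matrix P(σ,α) is invertible. -/
/-!
A left `A`-linear map `φ : A → A*` is determined by the functional `f = φ 1`, through
`φ a = (y ↦ f (y * a))`, and its matrix in the bases `(e i)` and `(e i)*` is `(f (e i * e j))`.
The grading condition on `φ` says exactly that `f` vanishes on the components of degree `≠ σ`,
i.e. `f = ∑_{ℓ ∈ J_σ} α ℓ • (e ℓ)*` with `α ℓ = f (e ℓ)`; for such `f` the matrix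
`(f (e i * e j))` is the paratrophic matrix `P(σ, α)`. So `φ` is bijective iff `P(σ, α)` is
invertible, and conversely every `α` with `P(σ, α)` invertible yields such a `φ`.
-/

open Finset Module

theorem LinearMap.isUnit_toMatrix_iff_exists_linearEquiv {R M N ι : Type*} [CommRing R]
    [AddCommGroup M] [AddCommGroup N] [Module R M] [Module R N] [Fintype ι] [DecidableEq ι]
    (v : Basis ι R M) (v' : Basis ι R N) (f : M →ₗ[R] N) :
    IsUnit (LinearMap.toMatrix v v' f) ↔ ∃ φ : M ≃ₗ[R] N, (φ : M →ₗ[R] N) = f := by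
  rw [Matrix.isUnit_iff_isUnit_det]
  refine ⟨fun h => ⟨.ofIsUnitDet h, LinearEquiv.coe_ofIsUnitDet h⟩, ?_⟩
  rintro ⟨φ, rfl⟩
  exact φ.isUnit_det v v'

section FrobeniusMap

variable {K A : Type*} [CommRing K] [Ring A] [Algebra K A]

/-- The map `a ↦ a ⇀ f` of the paper. -/
def frobeniusMap (f : Dual K A) : A →ₗ[K] Dual K A :=
  (LinearMap.mul K A).flip.compr₂ f

@[simp]
theorem frobeniusMap_apply (f : Dual K A) (a y : A) : frobeniusMap f a y = f (y * a) := rfl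

theorem frobeniusMap_mul_apply (f : Dual K A) (a x y : A) :
    frobeniusMap f (a * x) y = frobeniusMap f x (y * a) := by
  simp [mul_assoc]

theorem eq_frobeniusMap_of_mul_apply {φ : A →ₗ[K] Dual K A}
    (hφ : ∀ a x y : A, φ (a * x) y = φ x (y * a)) : φ = frobeniusMap (φ 1) := by
  ext a y
  simpa using hφ a 1 y

theorem toMatrix_frobeniusMap {J : Type*} [Fintype J] [DecidableEq J] (e : Basis J K A)
    (f : Dual K A) :
    LinearMap.toMatrix e e.dualBasis (frobeniusMap f) = Matrix.of fun i j => f (e i * e j) := by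
  ext i j
  simp [LinearMap.toMatrix_apply]

end FrobeniusMap

section ParatrophicForm

variable {K A G J : Type*} [CommRing K] [Ring A] [Algebra K A] [DecidableEq G]
  [Fintype J] (deg : J → G) (e : Basis J K A) (σ : G)

noncomputable def paratrophicForm (α : J → K) : Dual K A :=
  ∑ ℓ ∈ univ.filter (fun ℓ => deg ℓ = σ), α ℓ • e.coord ℓ

theorem paratrophicForm_apply (α : J → K) (x : A) :
    paratrophicForm deg e σ α x = ∑ ℓ ∈ univ.filter (fun ℓ => deg ℓ = σ), α ℓ * e.repr x ℓ := by
  simp [paratrophicForm]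

theorem paratrophicForm_eq_zero_of_mem_span (α : J → K) {g : G} (hg : g ≠ σ) {x : A}
    (hx : x ∈ Submodule.span K (e '' {i | deg i = g})) : paratrophicForm deg e σ α x = 0 := by
  rw [Basis.mem_span_image] at hx
  rw [paratrophicForm_apply]
  refine sum_eq_zero fun ℓ hℓ => ?_
  have hℓx : ℓ ∉ (e.repr x).support := fun h => hg ((hx h).symm.trans (mem_filter.1 hℓ).2)
  rw [Finsupp.notMem_support_iff.1 hℓx, mul_zero]

theorem eq_paratrophicForm {f : Dual K A} (hf : ∀ ℓ, deg ℓ ≠ σ → f (e ℓ) = 0) :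
    f = paratrophicForm deg e σ (fun ℓ => f (e ℓ)) := by
  classical
  refine e.ext fun m => ?_
  by_cases hm : deg m = σ
  · simp [paratrophicForm_apply, Finsupp.single_apply, hm]
  · simp [paratrophicForm_apply, Finsupp.single_apply, hm, hf m hm]

end ParatrophicForm

theorem frobeniusMap_apply_eq_zero {K A G : Type*} [CommRing K] [Ring A] [Algebra K A] [Group G]
    {𝒜 : G → Submodule K A}
    (h_mul : ∀ {g h : G} {a b : A}, a ∈ 𝒜 g → b ∈ 𝒜 h → a * b ∈ 𝒜 (g * h))
    {σ : G} {f : Dual K A} (hf : ∀ k ≠ σ, ∀ z ∈ 𝒜 k, f z = 0)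
    {g h : G} (hgh : h ≠ g⁻¹) {x y : A} (hx : x ∈ 𝒜 (g * σ)) (hy : y ∈ 𝒜 h) :
    frobeniusMap f x y = 0 := by
  refine hf _ ?_ _ (h_mul hy hx)
  rwa [← mul_assoc, Ne, mul_eq_right, mul_eq_one_iff_eq_inv]

/-- **Proposition B.**  A finite-dimensional `G`-graded algebra `A` is σ-graded Frobenius
(`A* ≅ A(σ)` as graded left `A`-modules, unfolded: there is a `K`-linear equivalence
`φ : A ≃ Aᵏ` which is left `A`-linear for the action `(a ⇀ f)(y) = f(y·a)` and which maps
`A(σ)_g = 𝒜 (g·σ)` into `(A*)_g = {f | f(𝒜 h) = 0 for h ≠ g⁻¹}`) if and only if some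
σ-paratrophic matrix `P(σ,α)` is invertible. -/
theorem stmt4 (K : Type) [Field K] (G : Type) [Group G] [DecidableEq G]
    (A : Type) [Ring A] [Algebra K A] (𝒜 : G → Submodule K A)
    (h_one : (1 : A) ∈ 𝒜 1)
    (h_mul : ∀ {g h : G} {a b : A}, a ∈ 𝒜 g → b ∈ 𝒜 h → a * b ∈ 𝒜 (g * h))
    (J : Type) [Fintype J] [DecidableEq J]
    (deg : J → G) (e : Module.Basis J K A)
    (h𝒜 : ∀ g : G, 𝒜 g = Submodule.span K (e '' {i | deg i = g}))
    (σ : G)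
    (c : J → J → J → K) (hc : ∀ i j ℓ, c i j ℓ = e.repr (e i * e j) ℓ) :
    (∃ φ : A ≃ₗ[K] Module.Dual K A,
        (∀ a x y : A, φ (a * x) y = φ x (y * a)) ∧
        (∀ g : G, ∀ x ∈ 𝒜 (g * σ), ∀ h : G, h ≠ g⁻¹ → ∀ y ∈ 𝒜 h, φ x y = 0)) ↔
    (∃ α : J → K,
        IsUnit (Matrix.of fun i j : J =>
          ∑ ℓ ∈ univ.filter (fun ℓ => deg ℓ = σ), α ℓ * c i j ℓ)) := by
  have hP : ∀ α : J → K, (Matrix.of fun i j : J =>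
      ∑ ℓ ∈ univ.filter (fun ℓ => deg ℓ = σ), α ℓ * c i j ℓ) =
      LinearMap.toMatrix e e.dualBasis (frobeniusMap (paratrophicForm deg e σ α)) := by
    intro α
    ext i j
    simp [toMatrix_frobeniusMap, paratrophicForm_apply, hc]
  constructor
  · rintro ⟨φ, hφA, hφg⟩
    have hf : ∀ ℓ, deg ℓ ≠ σ → φ 1 (e ℓ) = 0 := fun ℓ hℓ =>
      hφg σ⁻¹ 1 (by simpa using h_one) (deg ℓ) (by simpa using hℓ) (e ℓ)
        (h𝒜 _ ▸ Submodule.subset_span ⟨ℓ, rfl, rfl⟩)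
    refine ⟨fun ℓ => φ 1 (e ℓ), ?_⟩
    rw [hP, ← eq_paratrophicForm deg e σ hf]
    exact (LinearMap.isUnit_toMatrix_iff_exists_linearEquiv _ _ _).2
      ⟨φ, eq_frobeniusMap_of_mul_apply (φ := (φ : A →ₗ[K] Dual K A)) hφA⟩
  · rintro ⟨α, hα⟩
    rw [hP] at hα
    obtain ⟨φ, hφ⟩ := (LinearMap.isUnit_toMatrix_iff_exists_linearEquiv _ _ _).1 hα
    have hφ' : ∀ x, φ x = frobeniusMap (paratrophicForm deg e σ α) x := fun x =>
      LinearMap.congr_fun hφ x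
    refine ⟨φ, fun a x y => ?_, fun g x hx h hh y hy => ?_⟩
    · rw [hφ', hφ', frobeniusMap_mul_apply]
    · rw [hφ']
      refine frobeniusMap_apply_eq_zero h_mul (fun k hk z hz => ?_) hh hx hy
      exact paratrophicForm_eq_zero_of_mem_span deg e σ α hk (h𝒜 k ▸ hz)
end

section
/- The algebra A(q), regarded with its (Z/2)^n-grading in which e_g has degree g, is τ-graded Frobenius for τ = (1,1,...,1): its dual A(q)* is isomorphic to the shift A(q)(τ) as graded left A(q)-modules. -/
open Finset

inductive AqRel (K : Type) [Field K] (n : ℕ) (q : Fin n → Fin n → K) :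
    FreeAlgebra K (Fin n) → FreeAlgebra K (Fin n) → Prop
  | comm : ∀ i j : Fin n, i < j →
      AqRel K n q (FreeAlgebra.ι K j * FreeAlgebra.ι K i)
        (q i j • (FreeAlgebra.ι K i * FreeAlgebra.ι K j))
  | sq : ∀ i : Fin n, AqRel K n q (FreeAlgebra.ι K i * FreeAlgebra.ι K i) 0

abbrev Aq (K : Type) [Field K] (n : ℕ) (q : Fin n → Fin n → K) : Type :=
  RingQuot (AqRel K n q)

noncomputable def xq (K : Type) [Field K] (n : ℕ) (q : Fin n → Fin n → K) (i : Fin n) :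
    Aq K n q :=
  RingQuot.mkAlgHom K (AqRel K n q) (FreeAlgebra.ι K i)

noncomputable def eq' (K : Type) [Field K] (n : ℕ) (q : Fin n → Fin n → K)
    (g : Fin n → ZMod 2) : Aq K n q :=
  ((List.finRange n).map (fun i => if g i = 1 then xq K n q i else 1)).prod

/-- The homogeneous component of degree `g ∈ (ℤ/2)ⁿ` of `A(q)`: the line `K·e_g`. -/
noncomputable def AqGrade (K : Type) [Field K] (n : ℕ) (q : Fin n → Fin n → K)
    (g : Fin n → ZMod 2) : Submodule K (Aq K n q) :=
  Submodule.span K {eq' K n q g}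

/-!
The monomials `e_g` form a basis of `A(q)`. They span because `x_i e_g` is a scalar multiple of
`e_{g+δ_i}`; they are independent because `A(q)` acts on `K[(ℤ/2)ⁿ]` by `x_i δ_g = c δ_{g+δ_i}`
with the same scalars `c`, and then `e_g δ_0` is a nonzero multiple of `δ_g`. The same computation
gives `e_g e_h ∈ K e_{g+h}`, with a nonzero coefficient when `g` and `h` have disjoint supports.
So the functional `λ` = "coefficient of `e_τ`" pairs `e_{τ-g}` nondegenerately with `e_g` and
with nothing else, and `x ↦ (y ↦ λ(y x))` is a graded isomorphism `A(q) ≃ A(q)*` of left modules.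
-/

lemma ZMod.eq_zero_of_ne_one_two {a : ZMod 2} (h : a ≠ 1) : a = 0 := by
  revert a; decide

section FrobeniusPairing

variable {K A G : Type*} [Field K] [Ring A] [Algebra K A]

noncomputable def frobeniusPairing (b : Module.Basis G K A) (τ : G) : A →ₗ[K] Module.Dual K A :=
  (LinearMap.mul K A).flip.compr₂ (b.coord τ)

lemma frobeniusPairing_apply (b : Module.Basis G K A) (τ : G) (x y : A) :
    frobeniusPairing b τ x y = b.coord τ (y * x) :=
  rfl

variable [AddCommGroup G] {b : Module.Basis G K A} {τ : G} (hb : ∀ g h, b g * b h ∈ K ∙ b (g + h))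
include hb

lemma frobeniusPairing_eq_zero {h k : G} {x y : A} (hx : x ∈ K ∙ b k) (hy : y ∈ K ∙ b h)
    (hhk : h + k ≠ τ) : frobeniusPairing b τ x y = 0 := by
  obtain ⟨s, rfl⟩ := Submodule.mem_span_singleton.mp hx
  obtain ⟨t, rfl⟩ := Submodule.mem_span_singleton.mp hy
  obtain ⟨u, hu⟩ := Submodule.mem_span_singleton.mp (hb h k)
  simp [frobeniusPairing_apply, ← hu, hhk]

lemma coord_basis_sub_mul (g : G) (x : A) :
    b.coord τ (b (τ - g) * x) = b.coord τ (b (τ - g) * b g) * b.coord g x := by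
  suffices b.coord τ ∘ₗ LinearMap.mulLeft K (b (τ - g)) =
      b.coord τ (b (τ - g) * b g) • b.coord g from LinearMap.congr_fun this x
  refine b.ext fun h => ?_
  by_cases hgh : h = g
  · simp [hgh]
  · have hne : τ - g + h ≠ τ := fun H => hgh (by simpa using congrArg (· - (τ - g)) H)
    simpa [hgh, frobeniusPairing_apply] using frobeniusPairing_eq_zero hb
      (Submodule.mem_span_singleton_self _) (Submodule.mem_span_singleton_self _) hne

lemma frobeniusPairing_injective (hnd : ∀ g, b (τ - g) * b g ≠ 0) :
    Function.Injective (frobeniusPairing b τ) := by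
  refine (injective_iff_map_eq_zero _).mpr fun x hx => b.ext_elem fun g => ?_
  have hcoord : b.coord τ (b (τ - g) * b g) ≠ 0 := by
    obtain ⟨u, hu⟩ := Submodule.mem_span_singleton.mp (hb (τ - g) g)
    rw [sub_add_cancel] at hu
    have hu0 : u ≠ 0 := by
      rintro rfl
      exact hnd g (by rw [← hu, zero_smul])
    simpa [← hu] using hu0
  have := coord_basis_sub_mul (τ := τ) hb g x
  rw [← frobeniusPairing_apply, hx, LinearMap.zero_apply] at this
  rw [map_zero, Finsupp.zero_apply]
  exact (mul_eq_zero.mp this.symm).resolve_left hcoord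

theorem exists_linearEquiv_dual_of_graded_basis [Finite G] (hnd : ∀ g, b (τ - g) * b g ≠ 0) :
    ∃ φ : A ≃ₗ[K] Module.Dual K A, (∀ a x y : A, φ (a * x) y = φ x (y * a)) ∧
      ∀ h k : G, ∀ x ∈ K ∙ b k, ∀ y ∈ K ∙ b h, h + k ≠ τ → φ x y = 0 := by
  have := Module.Finite.of_basis b
  refine ⟨(frobeniusPairing b τ).linearEquivOfInjective (frobeniusPairing_injective hb hnd)
    Subspace.dual_finrank_eq.symm, fun a x y => ?_,
    fun h k x hx y hy hhk => frobeniusPairing_eq_zero hb hx hy hhk⟩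
  simp [frobeniusPairing_apply, mul_assoc]

end FrobeniusPairing

section Monomials

variable {K : Type} [Field K] {n : ℕ} {q : Fin n → Fin n → K}

lemma xq_mul_self (i : Fin n) : xq K n q i * xq K n q i = 0 := by
  simpa [xq] using RingQuot.mkAlgHom_rel K (AqRel.sq (K := K) (q := q) i)

lemma xq_mul_xq_of_lt {i j : Fin n} (h : i < j) :
    xq K n q j * xq K n q i = q i j • (xq K n q i * xq K n q j) := by
  simpa [xq] using RingQuot.mkAlgHom_rel K (AqRel.comm (K := K) (q := q) i j h)

/-- `x_i e_g = xqCoeff q g i • e_{g + δ_i}`: moving `x_i` to its place in `e_g`, it passes the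
variables `x_k` of `e_g` with `k < i`. -/
noncomputable def xqCoeff (q : Fin n → Fin n → K) (g : Fin n → ZMod 2) (i : Fin n) : K :=
  if g i = 1 then 0 else ∏ k with k < i ∧ g k = 1, q k i

lemma xqCoeff_ne_zero (hq : ∀ i j : Fin n, i < j → q i j ≠ 0) {g : Fin n → ZMod 2} {i : Fin n}
    (hgi : g i = 0) : xqCoeff q g i ≠ 0 := by
  rw [xqCoeff, if_neg (by simp [hgi])]
  exact Finset.prod_ne_zero_iff.mpr fun k hk => hq k i (Finset.mem_filter.mp hk).2.1

variable (K q) in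
noncomputable def monomialOn (l : List (Fin n)) (g : Fin n → ZMod 2) : Aq K n q :=
  (l.map fun i => if g i = 1 then xq K n q i else 1).prod

lemma eq'_eq_monomialOn (g : Fin n → ZMod 2) :
    eq' K n q g = monomialOn K q (List.finRange n) g := rfl

@[simp] lemma monomialOn_nil (g : Fin n → ZMod 2) : monomialOn K q [] g = 1 := rfl

@[simp] lemma monomialOn_cons (a : Fin n) (l : List (Fin n)) (g : Fin n → ZMod 2) :
    monomialOn K q (a :: l) g = (if g a = 1 then xq K n q a else 1) * monomialOn K q l g := rfl

lemma monomialOn_congr {l : List (Fin n)} {g g' : Fin n → ZMod 2} (h : ∀ k ∈ l, g k = g' k) :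
    monomialOn K q l g = monomialOn K q l g' := by
  rw [monomialOn, monomialOn, List.map_congr_left fun k hk => by rw [h k hk]]

lemma xq_mul_monomialOn (i : Fin n) (g : Fin n → ZMod 2) :
    ∀ l : List (Fin n), l.Pairwise (· < ·) → i ∈ l →
      xq K n q i * monomialOn K q l g =
        (if g i = 1 then 0 else ∏ k ∈ l.toFinset with k < i ∧ g k = 1, q k i) •
          monomialOn K q l (g + Pi.single i 1)
  | [], _, hi => absurd hi List.not_mem_nil
  | a :: l, hl, hi => by
    obtain ⟨hal, hl⟩ := List.pairwise_cons.mp hl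
    have hal' : a ∉ l := fun h => lt_irrefl a (hal a h)
    obtain rfl | hil := List.mem_cons.mp hi
    · rw [monomialOn_cons, monomialOn_cons,
        monomialOn_congr (g := g + Pi.single i 1) (g' := g) fun k hk => by
          simp [(hal k hk).ne']]
      have hnone : ((insert i l.toFinset).filter fun k => k < i ∧ g k = 1) = ∅ := by
        ext k
        simp only [Finset.mem_filter, Finset.mem_insert, List.mem_toFinset,
          Finset.notMem_empty, iff_false, not_and]
        rintro (rfl | hk) hki
        exacts [absurd hki (lt_irrefl k), absurd (hal k hk) hki.not_gt]
      by_cases hgi : g i = 1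
      · simp [hgi, ← mul_assoc, xq_mul_self]
      · simp [ZMod.eq_zero_of_ne_one_two hgi, hnone]
    · have hai := hal i hil
      rw [monomialOn_cons, monomialOn_cons, Pi.add_apply, Pi.single_eq_of_ne hai.ne, add_zero,
        ← mul_assoc, List.toFinset_cons, Finset.filter_insert]
      by_cases hga : g a = 1
      · rw [if_pos hga, if_pos (show a < i ∧ g a = 1 from ⟨hai, hga⟩),
          Finset.prod_insert (by simp [hal']), xq_mul_xq_of_lt hai, smul_mul_assoc,
          mul_assoc, xq_mul_monomialOn i g l hl hil, mul_smul_comm, smul_smul]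
        split_ifs <;> simp
      · rw [if_neg hga, if_neg (show ¬(a < i ∧ g a = 1) from fun h => hga h.2), mul_one, one_mul,
          xq_mul_monomialOn i g l hl hil]

lemma xq_mul_eq' (i : Fin n) (g : Fin n → ZMod 2) :
    xq K n q i * eq' K n q g = xqCoeff q g i • eq' K n q (g + Pi.single i 1) := by
  simpa [xqCoeff, eq'_eq_monomialOn] using xq_mul_monomialOn (K := K) (q := q) i g _
    (List.pairwise_lt_finRange n) (List.mem_finRange i)

section Action

variable {M : Type*} [AddCommGroup M] [Module K M] (ρ : Aq K n q →ₐ[K] Module.End K M)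
  {v : (Fin n → ZMod 2) → M}

lemma exists_act_monomialOn_eq_smul (hq : ∀ i j : Fin n, i < j → q i j ≠ 0)
    (hv : ∀ i g, ρ (xq K n q i) (v g) = xqCoeff q g i • v (g + Pi.single i 1))
    (g : Fin n → ZMod 2) :
    ∀ l : List (Fin n), l.Nodup → ∀ h : Fin n → ZMod 2, ∃ c : K,
      ρ (monomialOn K q l g) (v h) = c • v (h + fun k => if k ∈ l then g k else 0) ∧
        ((∀ k ∈ l, g k = 1 → h k = 0) → c ≠ 0)
  | [], _, h => ⟨1, by simp [Pi.add_def], fun _ => one_ne_zero⟩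
  | a :: l, hl, h => by
    obtain ⟨hal, hl⟩ := List.nodup_cons.mp hl
    obtain ⟨c, hc, hc0⟩ := exists_act_monomialOn_eq_smul hq hv g l hl h
    rw [monomialOn_cons, map_mul, Module.End.mul_apply, hc, map_smul]
    by_cases hga : g a = 1
    · refine ⟨c * xqCoeff q (h + fun k => if k ∈ l then g k else 0) a, ?_, fun hd => ?_⟩
      · rw [if_pos hga, hv, smul_smul]
        congr 2
        ext k
        by_cases hka : k = a
        · subst hka; simp [hal, hga]
        · simp [hka]
      · refine mul_ne_zero (hc0 fun k hk => hd k (List.mem_cons_of_mem a hk))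
          (xqCoeff_ne_zero hq ?_)
        simp [hal, hd a List.mem_cons_self hga]
    · refine ⟨c, ?_, fun hd => hc0 fun k hk => hd k (List.mem_cons_of_mem a hk)⟩
      rw [if_neg hga, map_one, Module.End.one_apply]
      congr 2
      ext k
      by_cases hka : k = a
      · subst hka; simp [hal, ZMod.eq_zero_of_ne_one_two hga]
      · simp [hka]

lemma exists_act_eq'_eq_smul (hq : ∀ i j : Fin n, i < j → q i j ≠ 0)
    (hv : ∀ i g, ρ (xq K n q i) (v g) = xqCoeff q g i • v (g + Pi.single i 1))
    (g h : Fin n → ZMod 2) :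
    ∃ c : K, ρ (eq' K n q g) (v h) = c • v (g + h) ∧ ((∀ k, g k = 1 → h k = 0) → c ≠ 0) := by
  obtain ⟨c, hc, hc0⟩ :=
    exists_act_monomialOn_eq_smul ρ hq hv g _ (List.nodup_finRange n) h
  refine ⟨c, ?_, fun hd => hc0 fun k _ => hd k⟩
  rw [eq'_eq_monomialOn, hc, add_comm g]
  simp

end Action

lemma exists_eq'_mul_eq' (hq : ∀ i j : Fin n, i < j → q i j ≠ 0) (g h : Fin n → ZMod 2) :
    ∃ c : K, eq' K n q g * eq' K n q h = c • eq' K n q (g + h) ∧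
      ((∀ k, g k = 1 → h k = 0) → c ≠ 0) := by
  simpa using exists_act_eq'_eq_smul (Algebra.lmul K _) hq
    (fun i g => by simpa using xq_mul_eq' i g) g h

lemma xqCoeff_add_single_of_lt {g : Fin n → ZMod 2} {i j : Fin n} (hij : i < j) (hgi : g i = 0) :
    xqCoeff q (g + Pi.single i 1) j = q i j * xqCoeff q g j := by
  have hfilter : (univ.filter fun k => k < j ∧ (g + Pi.single i 1 : Fin n → ZMod 2) k = 1) =
      insert i (univ.filter fun k => k < j ∧ g k = 1) := by
    ext k
    by_cases hki : k = i
    · subst hki; simp [hij, hgi]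
    · simp [hki]
  rw [xqCoeff, xqCoeff, Pi.add_apply, Pi.single_eq_of_ne hij.ne', add_zero, hfilter,
    Finset.prod_insert (by simp [hgi])]
  split_ifs <;> simp

lemma xqCoeff_add_single_of_gt {g : Fin n → ZMod 2} {i j : Fin n} (hij : i < j) :
    xqCoeff q (g + Pi.single j 1) i = xqCoeff q g i := by
  have hfilter : (univ.filter fun k => k < i ∧ (g + Pi.single j 1 : Fin n → ZMod 2) k = 1) =
      univ.filter fun k => k < i ∧ g k = 1 := by
    ext k
    by_cases hkj : k = j
    · subst hkj; simp [hij.not_gt]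
    · simp [hkj]
  rw [xqCoeff, xqCoeff, Pi.add_apply, Pi.single_eq_of_ne hij.ne, add_zero, hfilter]

variable (q) in
noncomputable def shiftOp (i : Fin n) : Module.End K ((Fin n → ZMod 2) →₀ K) :=
  Finsupp.lsum K fun g => xqCoeff q g i • Finsupp.lsingle (g + Pi.single i 1)

lemma shiftOp_single (i : Fin n) (g : Fin n → ZMod 2) (c : K) :
    shiftOp q i (Finsupp.single g c) = xqCoeff q g i • Finsupp.single (g + Pi.single i 1) c := by
  simp [shiftOp]

lemma shiftOp_mul_self (i : Fin n) : shiftOp q i * shiftOp q i = 0 := by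
  refine Finsupp.lhom_ext fun g c => ?_
  rw [Module.End.mul_apply, shiftOp_single, map_smul, shiftOp_single, LinearMap.zero_apply]
  by_cases hgi : g i = 1
  · simp [xqCoeff, hgi]
  · simp [xqCoeff, ZMod.eq_zero_of_ne_one_two hgi]

lemma shiftOp_mul_shiftOp_of_lt {i j : Fin n} (hij : i < j) :
    shiftOp q j * shiftOp q i = q i j • (shiftOp q i * shiftOp q j) := by
  refine Finsupp.lhom_ext fun g c => ?_
  simp only [LinearMap.smul_apply, Module.End.mul_apply, shiftOp_single, map_smul, smul_smul,
    xqCoeff_add_single_of_gt hij, add_right_comm g (Pi.single i 1)]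
  by_cases hgi : g i = 1
  · simp [xqCoeff, hgi]
  rw [xqCoeff_add_single_of_lt hij (ZMod.eq_zero_of_ne_one_two hgi)]
  congr 1
  ring

variable (K q) in
noncomputable def shiftRep : Aq K n q →ₐ[K] Module.End K ((Fin n → ZMod 2) →₀ K) :=
  RingQuot.liftAlgHom K ⟨FreeAlgebra.lift K (shiftOp q), by
    rintro _ _ (⟨i, j, hij⟩ | i)
    · simpa using shiftOp_mul_shiftOp_of_lt hij
    · simpa using shiftOp_mul_self i⟩

lemma shiftRep_xq (i : Fin n) : shiftRep K q (xq K n q i) = shiftOp q i := by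
  rw [xq, shiftRep, RingQuot.liftAlgHom_mkAlgHom_apply, FreeAlgebra.lift_ι_apply]

lemma linearIndependent_eq' (hq : ∀ i j : Fin n, i < j → q i j ≠ 0) :
    LinearIndependent K (eq' K n q) := by
  choose c hc hc0 using fun g => exists_act_eq'_eq_smul (shiftRep K q) hq
    (v := fun g => Finsupp.single g 1) (fun i g => by simp [shiftRep_xq, shiftOp_single]) g 0
  let θ := (LinearMap.applyₗ (Finsupp.single 0 1)).comp (shiftRep K q).toLinearMap
  have hθ : θ ∘ eq' K n q = fun g => Finsupp.single g (c g) := by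
    ext g : 1
    simp [θ, hc]
  refine LinearIndependent.of_comp θ ?_
  rw [hθ]
  exact Finsupp.linearIndependent_single_of_ne_zero fun g => hc0 g fun k _ => rfl

lemma eq'_zero : eq' K n q 0 = 1 := by
  simp [eq']

lemma span_range_eq' : Submodule.span K (Set.range (eq' K n q)) = ⊤ := by
  set S := Submodule.span K (Set.range (eq' K n q))
  have hxq (i : Fin n) : S ≤ S.comap (LinearMap.mulLeft K (xq K n q i)) := by
    refine Submodule.span_le.mpr ?_
    rintro _ ⟨g, rfl⟩
    simpa [xq_mul_eq'] using S.smul_mem _ (Submodule.subset_span ⟨_, rfl⟩)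
  have hmul (a : Aq K n q) : ∀ s ∈ S, a * s ∈ S := by
    obtain ⟨p, rfl⟩ := RingQuot.mkAlgHom_surjective K (AqRel K n q) a
    induction p using FreeAlgebra.induction with
    | grade0 r => simpa [Algebra.smul_def] using fun s hs => S.smul_mem r hs
    | grade1 i => exact fun s hs => hxq i hs
    | mul a b ha hb => exact fun s hs => by rw [map_mul, mul_assoc]; exact ha _ (hb s hs)
    | add a b ha hb => exact fun s hs => by rw [map_add, add_mul]; exact add_mem (ha s hs) (hb s hs)
  refine Submodule.eq_top_iff'.mpr fun a => ?_
  simpa using hmul a 1 (Submodule.subset_span ⟨0, eq'_zero⟩)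

section Basis

variable (hq : ∀ i j : Fin n, i < j → q i j ≠ 0)
include hq

variable (K n q) in
noncomputable def monomialBasis : Module.Basis (Fin n → ZMod 2) K (Aq K n q) :=
  .mk (linearIndependent_eq' hq) span_range_eq'.ge

@[simp] lemma monomialBasis_apply (g : Fin n → ZMod 2) : monomialBasis K n q hq g = eq' K n q g :=
  Module.Basis.mk_apply _ _ g

lemma monomialBasis_mul_mem_span (g h : Fin n → ZMod 2) :
    monomialBasis K n q hq g * monomialBasis K n q hq h ∈ K ∙ monomialBasis K n q hq (g + h) := by
  obtain ⟨c, hc, -⟩ := exists_eq'_mul_eq' hq g h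
  simpa [hc] using Submodule.smul_mem _ c (Submodule.mem_span_singleton_self _)

lemma monomialBasis_mul_ne_zero (g : Fin n → ZMod 2) :
    monomialBasis K n q hq (1 - g) * monomialBasis K n q hq g ≠ 0 := by
  have hdisj (k : Fin n) : (1 - g) k = 1 → g k = 0 := by
    simp only [Pi.sub_apply, Pi.one_apply]
    generalize g k = a
    revert a; decide
  obtain ⟨c, hc, hc0⟩ := exists_eq'_mul_eq' hq (1 - g) g
  rw [monomialBasis_apply, monomialBasis_apply, hc, sub_add_cancel]
  exact smul_ne_zero (hc0 hdisj) ((linearIndependent_eq' hq).ne_zero 1)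

end Basis

end Monomials

/-- `A(q)*` is a left module via `(a • f) y = f (y * a)`. -/
theorem stmt8_general (K : Type) [Field K] (n : ℕ)
    (q : Fin n → Fin n → K) (hq : ∀ i j : Fin n, i < j → q i j ≠ 0) :
    ∃ φ : Aq K n q ≃ₗ[K] Module.Dual K (Aq K n q),
      (∀ a x y : Aq K n q, φ (a * x) y = φ x (y * a)) ∧
      (∀ g : Fin n → ZMod 2, ∀ x ∈ AqGrade K n q (g + fun _ => 1),
        ∀ h : Fin n → ZMod 2, h ≠ -g → ∀ y ∈ AqGrade K n q h, φ x y = 0) := by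
  obtain ⟨φ, hφ, hφ0⟩ := exists_linearEquiv_dual_of_graded_basis (τ := 1)
    (monomialBasis_mul_mem_span hq) (monomialBasis_mul_ne_zero hq)
  refine ⟨φ, hφ, fun g x hx h hgh y hy => hφ0 h (g + 1) x
    (by rw [monomialBasis_apply]; exact hx) y (by rw [monomialBasis_apply]; exact hy) ?_⟩
  rwa [← add_assoc, Ne, add_eq_right, add_eq_zero_iff_eq_neg]

/-- **Proposition C (ii), positive part.**  `A(q)` with its `(ℤ/2)ⁿ`-grading is
`τ`-graded Frobenius for `τ = (1,…,1)`: there is a `K`-linear equivalence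
`φ : A(q) ≃ A(q)*` which is left `A(q)`-linear (`φ(a·x)(y) = φ(x)(y·a)`) and maps the
component `A(q)(τ)_g = A(q)_{g+τ}` into `(A(q)*)_g = {f | f(A(q)_h) = 0 for h ≠ -g}`. -/
theorem stmt8 (K : Type) [Field K] (n : ℕ) (hn : 2 ≤ n)
    (q : Fin n → Fin n → K) (hq : ∀ i j : Fin n, i < j → q i j ≠ 0) :
    ∃ φ : Aq K n q ≃ₗ[K] Module.Dual K (Aq K n q),
      (∀ a x y : Aq K n q, φ (a * x) y = φ x (y * a)) ∧
      (∀ g : Fin n → ZMod 2, ∀ x ∈ AqGrade K n q (g + fun _ => 1),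
        ∀ h : Fin n → ZMod 2, h ≠ -g → ∀ y ∈ AqGrade K n q h, φ x y = 0) :=
  stmt8_general K n q hq
end

section
/- The algebra A(q), regarded with its (Z/2)^n-grading, is not σ-graded Frobenius for any σ ∈ (Z/2)^n with σ ≠ (1,1,...,1). -/
open Finset

/-
Write `e g` for the monomial `eq' K n q g` and `δᵢ` for `Pi.single i 1`. If `σ i = 0`, then
`x i * e σ` is a nonzero multiple of the monomial `e (δᵢ + σ)`. For a graded Frobenius form `φ`,
associativity gives `φ (x i * e σ) (x i) = φ (e σ) (x i * x i) = 0`, and the grading condition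
kills `φ (e (δᵢ + σ)) (e h)` for every `h ≠ δᵢ`. As the monomials span `A(q)`, this forces
`φ (e (δᵢ + σ)) = 0`, contradicting the injectivity of `φ` since `e (δᵢ + σ) ≠ 0`.
-/

lemma zmod_two_eq_zero_of_ne_one {a : ZMod 2} (ha : a ≠ 1) : a = 0 := by
  revert a
  decide

lemma ZModModule.add_eq_iff_eq_add {G : Type*} [AddCommGroup G] [Module (ZMod 2) G] {a b c : G} :
    a + b = c ↔ a = c + b := by
  rw [← ZModModule.sub_eq_add, sub_eq_iff_eq_add]

namespace Aq

variable {K : Type} [Field K] {n : ℕ} (q : Fin n → Fin n → K)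

lemma xq_mul_self (i : Fin n) : xq K n q i * xq K n q i = 0 := by
  simpa [xq] using RingQuot.mkAlgHom_rel K (AqRel.sq (q := q) i)

lemma xq_mul_xq_of_lt {i j : Fin n} (hij : i < j) :
    xq K n q j * xq K n q i = q i j • (xq K n q i * xq K n q j) := by
  simpa [xq] using RingQuot.mkAlgHom_rel K (AqRel.comm (q := q) i j hij)

noncomputable def listMonomial (l : List (Fin n)) (g : Fin n → ZMod 2) : Aq K n q :=
  (l.map fun j => if g j = 1 then xq K n q j else 1).prod

noncomputable def listSkewCoeff (l : List (Fin n)) (i : Fin n) (g : Fin n → ZMod 2) : K :=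
  (l.map fun j => if j < i ∧ g j = 1 then q j i else 1).prod

lemma listMonomial_cons (j : Fin n) (l : List (Fin n)) (g : Fin n → ZMod 2) :
    listMonomial q (j :: l) g = (if g j = 1 then xq K n q j else 1) * listMonomial q l g :=
  List.prod_cons

lemma listSkewCoeff_cons (j : Fin n) (l : List (Fin n)) (i : Fin n) (g : Fin n → ZMod 2) :
    listSkewCoeff q (j :: l) i g =
      (if j < i ∧ g j = 1 then q j i else 1) * listSkewCoeff q l i g :=
  List.prod_cons

lemma listMonomial_congr {l : List (Fin n)} {g h : Fin n → ZMod 2}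
    (hgh : ∀ j ∈ l, g j = h j) : listMonomial q l g = listMonomial q l h :=
  congrArg List.prod (List.map_congr_left fun j hj => by rw [hgh j hj])

lemma listSkewCoeff_eq_one {l : List (Fin n)} {i : Fin n} {g : Fin n → ZMod 2}
    (hl : ∀ j ∈ l, i ≤ j) : listSkewCoeff q l i g = 1 :=
  List.prod_eq_one fun c hc => by
    obtain ⟨j, hj, rfl⟩ := List.mem_map.mp hc
    exact if_neg fun h => (hl j hj).not_gt h.1

lemma xq_mul_listMonomial {l : List (Fin n)} (hl : l.Pairwise (· < ·)) {i : Fin n} (hi : i ∈ l)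
    (g : Fin n → ZMod 2) :
    xq K n q i * listMonomial q l g =
      if g i = 1 then 0 else listSkewCoeff q l i g • listMonomial q l (g + Pi.single i 1) := by
  induction l with
  | nil => simp at hi
  | cons j l ih =>
    obtain ⟨hjl, hl⟩ := List.pairwise_cons.mp hl
    rw [listMonomial_cons, listMonomial_cons, listSkewCoeff_cons]
    rcases List.mem_cons.mp hi with rfl | hi
    · have hil : ∀ k ∈ l, k ≠ i := fun k hk => (hjl k hk).ne'
      by_cases hgi : g i = 1
      · rw [if_pos hgi, if_pos hgi, ← mul_assoc, xq_mul_self, zero_mul]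
      · rw [if_neg hgi, if_neg hgi, if_neg (fun h => lt_irrefl i h.1),
          listSkewCoeff_eq_one q fun k hk => (hjl k hk).le,
          listMonomial_congr q (g := g + Pi.single i 1) (h := g) fun k hk => by simp [hil k hk]]
        simp [zmod_two_eq_zero_of_ne_one hgi]
    · have hji : j < i := hjl i hi
      have hfj : (g + Pi.single i 1 : Fin n → ZMod 2) j = g j := by simp [hji.ne]
      by_cases hgj : g j = 1
      · simp only [hfj, hgj, hji, and_self, if_true]
        rw [← mul_assoc, xq_mul_xq_of_lt q hji, smul_mul_assoc, mul_assoc, ih hl hi]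
        split_ifs
        · rw [mul_zero, smul_zero]
        · rw [mul_smul_comm, smul_smul]
      · simp only [hfj, hgj, and_false, if_false, one_mul, ih hl hi]

noncomputable def skewCoeff (i : Fin n) (g : Fin n → ZMod 2) : K :=
  ∏ j, if j < i ∧ g j = 1 then q j i else 1

lemma xq_mul_eq' (i : Fin n) (g : Fin n → ZMod 2) :
    xq K n q i * eq' K n q g =
      if g i = 1 then 0 else skewCoeff q i g • eq' K n q (g + Pi.single i 1) := by
  rw [skewCoeff, Fin.prod_univ_def]
  exact xq_mul_listMonomial q (List.pairwise_lt_finRange n) (List.mem_finRange i) g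

lemma skewCoeff_ne_zero (hq : ∀ i j : Fin n, i < j → q i j ≠ 0) (i : Fin n)
    (g : Fin n → ZMod 2) : skewCoeff q i g ≠ 0 :=
  Finset.prod_ne_zero_iff.mpr fun j _ => by
    split_ifs with h
    exacts [hq j i h.1, one_ne_zero]

lemma skewCoeff_eq_one {i : Fin n} {g : Fin n → ZMod 2} (hg : ∀ j < i, g j = 0) :
    skewCoeff q i g = 1 :=
  Finset.prod_eq_one fun j _ => if_neg fun h => by simp [hg j h.1] at h

lemma skewCoeff_add_single_of_le {i j : Fin n} (hij : i ≤ j) (g : Fin n → ZMod 2) :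
    skewCoeff q i (g + Pi.single j 1) = skewCoeff q i g :=
  Finset.prod_congr rfl fun k _ => by
    by_cases hk : k < i
    · simp [(hk.trans_le hij).ne]
    · simp [hk]

lemma skewCoeff_eq_mul_skewCoeff_add_single {i j : Fin n} (hij : i < j) {g : Fin n → ZMod 2}
    (hg : g i = 1) : skewCoeff q j g = q i j * skewCoeff q j (g + Pi.single i 1) := by
  rw [skewCoeff, skewCoeff, Fintype.prod_eq_mul_prod_compl i, Fintype.prod_eq_mul_prod_compl i,
    ← mul_assoc]
  congr 1
  · simp [hg, hij]
  · refine Finset.prod_congr rfl fun k hk => ?_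
    simp [Finset.notMem_singleton.mp (Finset.mem_compl.mp hk)]

lemma eq'_zero : eq' K n q 0 = 1 :=
  List.prod_eq_one fun c hc => by
    obtain ⟨k, -, rfl⟩ := List.mem_map.mp hc
    exact if_neg zero_ne_one

lemma xq_eq_eq'_single (i : Fin n) : xq K n q i = eq' K n q (Pi.single i 1) := by
  simpa [eq'_zero, skewCoeff_eq_one] using xq_mul_eq' q i 0

lemma span_range_eq'_eq_top : Submodule.span K (Set.range (eq' K n q)) = ⊤ := by
  set S := Submodule.span K (Set.range (eq' K n q))
  have hx : ∀ i, ∀ v ∈ S, xq K n q i * v ∈ S := fun i v hv => by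
    induction hv using Submodule.span_induction with
    | mem w hw =>
      obtain ⟨g, rfl⟩ := hw
      rw [xq_mul_eq']
      split_ifs
      exacts [S.zero_mem, S.smul_mem _ (Submodule.subset_span ⟨_, rfl⟩)]
    | zero => simp
    | add u w _ _ hu hw => simpa [mul_add] using S.add_mem hu hw
    | smul c u _ hu => simpa [mul_smul_comm] using S.smul_mem c hu
  have hmul : ∀ a : Aq K n q, ∀ v ∈ S, a * v ∈ S := by
    intro a
    obtain ⟨b, rfl⟩ := RingQuot.mkAlgHom_surjective K (AqRel K n q) a
    induction b using FreeAlgebra.induction with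
    | grade0 c => simpa [Algebra.algebraMap_eq_smul_one] using fun v hv => S.smul_mem c hv
    | grade1 i => exact hx i
    | mul a b ha hb => simpa [mul_assoc] using fun v hv => ha _ (hb v hv)
    | add a b ha hb => simpa [add_mul] using fun v hv => S.add_mem (ha v hv) (hb v hv)
  refine eq_top_iff.mpr fun a _ => ?_
  simpa using hmul a 1 (eq'_zero q ▸ Submodule.subset_span ⟨0, rfl⟩)

/-- Left multiplication by `x i` written in the monomial basis `(e g)`, on functions
`(ℤ/2)ⁿ → K`. Through it one sees that no monomial `e g` vanishes. -/
noncomputable def regularOp (i : Fin n) : Module.End K ((Fin n → ZMod 2) → K) where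
  toFun f g := if g i = 1 then skewCoeff q i g * f (g + Pi.single i 1) else 0
  map_add' f₁ f₂ := by
    funext g
    split_ifs <;> simp [mul_add, *]
  map_smul' c f := by
    funext g
    split_ifs <;> simp [mul_left_comm, *]

lemma regularOp_apply (i : Fin n) (f : (Fin n → ZMod 2) → K) (g : Fin n → ZMod 2) :
    regularOp q i f g = if g i = 1 then skewCoeff q i g * f (g + Pi.single i 1) else 0 :=
  rfl

lemma regularOp_mul_self (i : Fin n) : regularOp q i * regularOp q i = 0 := by
  refine LinearMap.ext fun f => funext fun g => ?_
  by_cases hg : g i = 1 <;> simp [regularOp_apply, hg]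

lemma regularOp_mul_regularOp_of_lt {i j : Fin n} (hij : i < j) :
    regularOp q j * regularOp q i = q i j • (regularOp q i * regularOp q j) := by
  refine LinearMap.ext fun f => funext fun g => ?_
  by_cases hgi : g i = 1
  · by_cases hgj : g j = 1
    · simp [regularOp_apply, hgi, hgj, hij.ne, hij.ne', skewCoeff_add_single_of_le q hij.le,
        skewCoeff_eq_mul_skewCoeff_add_single q hij hgi, add_right_comm g (Pi.single i 1)]
      ring
    · simp [regularOp_apply, hgi, hgj, hij.ne']
  · simp [regularOp_apply, hgi, hij.ne]

noncomputable def regularRep : Aq K n q →ₐ[K] Module.End K ((Fin n → ZMod 2) → K) :=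
  RingQuot.liftAlgHom K ⟨FreeAlgebra.lift K (regularOp q), fun _ _ r => by
    cases r with
    | sq i => simpa using regularOp_mul_self q i
    | comm i j hij => simpa using regularOp_mul_regularOp_of_lt q hij⟩

lemma regularRep_xq (i : Fin n) : regularRep q (xq K n q i) = regularOp q i := by
  simp [regularRep, xq]

lemma regularOp_single (i : Fin n) (h : Fin n → ZMod 2) :
    regularOp q i (Pi.single h 1) =
      if h i = 1 then 0 else skewCoeff q i h • Pi.single (h + Pi.single i 1) 1 := by
  funext g
  by_cases hi : h i = 1
  · rw [if_pos hi, regularOp_apply, Pi.zero_apply]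
    split_ifs with hg
    · refine mul_eq_zero_of_right _ (Pi.single_eq_of_ne (fun he => ?_) _)
      simpa [hg, hi] using congrFun he i
    · rfl
  · rw [if_neg hi, regularOp_apply, Pi.smul_apply, Pi.single_apply, Pi.single_apply]
    simp only [ZModModule.add_eq_iff_eq_add]
    by_cases hg : g = h + Pi.single i 1
    · subst hg
      simp [zmod_two_eq_zero_of_ne_one hi, skewCoeff_add_single_of_le q le_rfl]
    · simp [hg]

lemma regularRep_eq'_apply_single_zero (g : Fin n → ZMod 2) :
    regularRep q (eq' K n q g) (Pi.single 0 1) = Pi.single g 1 := by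
  obtain ⟨s, rfl⟩ : ∃ s : Finset (Fin n), (fun k => if k ∈ s then 1 else 0) = g :=
    ⟨({k | g k = 1} : Finset (Fin n)), funext fun k => by
      by_cases hk : g k = 1 <;> simp [hk, zmod_two_eq_zero_of_ne_one]⟩
  induction s using Finset.induction_on_min with
  | empty => simp [← Pi.zero_def, eq'_zero]
  | insert a s ha ih =>
    have has : a ∉ s := fun h => (ha a h).false
    have hind : (fun k => if k ∈ insert a s then (1 : ZMod 2) else 0) =
        (fun k => if k ∈ s then 1 else 0) + Pi.single a 1 := funext fun k => by
      by_cases hk : k = a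
      · subst hk
        simp [has]
      · simp [hk]
    have hcoeff : skewCoeff q a (fun k => if k ∈ s then 1 else 0) = 1 :=
      skewCoeff_eq_one q fun j hj => if_neg fun hjs => (ha j hjs).not_gt hj
    have hsa : (if a ∈ s then (1 : ZMod 2) else 0) ≠ 1 := by simp [has]
    have hmul := xq_mul_eq' q a (fun k => if k ∈ s then 1 else 0)
    rw [if_neg hsa, hcoeff, one_smul] at hmul
    rw [hind, ← hmul, map_mul, Module.End.mul_apply, ih, regularRep_xq, regularOp_single,
      if_neg hsa, hcoeff, one_smul]

lemma eq'_ne_zero (g : Fin n → ZMod 2) : eq' K n q g ≠ 0 := fun h => by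
  simpa [h] using congrFun (regularRep_eq'_apply_single_zero q g) g

end Aq

theorem stmt9_general (K : Type) [Field K] (n : ℕ)
    (q : Fin n → Fin n → K) (hq : ∀ i j : Fin n, i < j → q i j ≠ 0)
    (σ : Fin n → ZMod 2) (hσ : σ ≠ fun _ => 1) :
    ¬ ∃ φ : Aq K n q ≃ₗ[K] Module.Dual K (Aq K n q),
      (∀ a x y : Aq K n q, φ (a * x) y = φ x (y * a)) ∧
      (∀ g : Fin n → ZMod 2, ∀ x ∈ AqGrade K n q (g + σ),
        ∀ h : Fin n → ZMod 2, h ≠ -g → ∀ y ∈ AqGrade K n q h, φ x y = 0) := by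
  rintro ⟨φ, hφ_mul, hφ_graded⟩
  obtain ⟨i, hi⟩ := Function.ne_iff.mp hσ
  have hx : xq K n q i * eq' K n q σ = Aq.skewCoeff q i σ • eq' K n q (Pi.single i 1 + σ) := by
    rw [Aq.xq_mul_eq', if_neg hi, add_comm]
  have hφ : φ (eq' K n q (Pi.single i 1 + σ)) = 0 := by
    refine LinearMap.ext_on_range (Aq.span_range_eq'_eq_top q) fun h => ?_
    by_cases hh : h = Pi.single i 1
    · have h0 : φ (xq K n q i * eq' K n q σ) (eq' K n q h) = 0 := by
        rw [hφ_mul, hh, ← Aq.xq_eq_eq'_single, Aq.xq_mul_self, map_zero]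
      rw [hx, map_smul, LinearMap.smul_apply, smul_eq_zero] at h0
      exact h0.resolve_left (Aq.skewCoeff_ne_zero q hq i σ)
    · exact hφ_graded _ _ (Submodule.mem_span_singleton_self _) h
        (by rwa [ZModModule.neg_eq_self]) _ (Submodule.mem_span_singleton_self _)
  exact Aq.eq'_ne_zero q _ (φ.map_eq_zero_iff.mp hφ)

/-- **Proposition C (ii), negative part.**  `A(q)` with its `(ℤ/2)ⁿ`-grading is not
`σ`-graded Frobenius for any `σ ≠ (1,…,1)`. -/
theorem stmt9 (K : Type) [Field K] (n : ℕ) (hn : 2 ≤ n)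
    (q : Fin n → Fin n → K) (hq : ∀ i j : Fin n, i < j → q i j ≠ 0)
    (σ : Fin n → ZMod 2) (hσ : σ ≠ fun _ => 1) :
    ¬ ∃ φ : Aq K n q ≃ₗ[K] Module.Dual K (Aq K n q),
      (∀ a x y : Aq K n q, φ (a * x) y = φ x (y * a)) ∧
      (∀ g : Fin n → ZMod 2, ∀ x ∈ AqGrade K n q (g + σ),
        ∀ h : Fin n → ZMod 2, h ≠ -g → ∀ y ∈ AqGrade K n q h, φ x y = 0) :=
  stmt9_general K n q hq σ hσ
end

section
/- The finite-dimensional algebra A(q) is a symmetric algebra (A ≅ A* as A-bimodules) if and only if for every 1 ≤ i ≤ n−1 one has q_{in} = (∏_{1≤p<i} q_{pi}) · (∏_{i<p≤n−1} q_{ip}^{-1}). -/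
/-!
The ordered monomials `X_S`, `S ⊆ Fin n`, form a basis of `A(q)` (independence is seen in an
explicit representation), and `X_S X_T = twist q S T • X_{S ∪ T}` for disjoint `S`, `T`, else
`0`.
A finite-dimensional algebra is symmetric iff it has a symmetrizing trace `t`. Such a `t` cannot
vanish on the top monomial (it would then vanish on the ideal `X_univ A = K X_univ`), so comparing
`t (X_i X_{iᶜ})` with `t (X_{iᶜ} X_i)` forces `∏_{p<i} q p i = ∏_{p>i} q i p` for every `i`.
Conversely these equalities give `twist q S Sᶜ = twist q Sᶜ S`, so the top coefficient is a
symmetric trace, nondegenerate because every `twist` is nonzero. The equality for the last index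
follows from the others, as the products of both sides over all `i` agree; for the other indices it
is the stated condition.
-/

open Finset

section SymmetricAlgebra

variable {K A : Type*} [Field K] [Ring A] [Algebra K A]

def IsSymmetrizingTrace (t : Module.Dual K A) : Prop :=
  (∀ x y, t (x * y) = t (y * x)) ∧ ∀ x, (∀ y, t (x * y) = 0) → x = 0

theorem exists_bimodule_dual_equiv_iff [FiniteDimensional K A] :
    (∃ φ : A ≃ₗ[K] Module.Dual K A,
        (∀ a x y : A, φ (a * x) y = φ x (y * a)) ∧
        (∀ a x y : A, φ (x * a) y = φ x (a * y))) ↔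
      ∃ t : Module.Dual K A, IsSymmetrizingTrace t := by
  constructor
  · rintro ⟨φ, hleft, hright⟩
    have hφ : ∀ x y, φ x y = φ 1 (x * y) := fun x y => by
      simpa using hright x 1 y
    refine ⟨φ 1, fun x y => ?_, fun x hx => φ.map_eq_zero_iff.1 ?_⟩
    · rw [← hφ]
      simpa using hleft x 1 y
    · ext y
      rw [hφ, hx, LinearMap.zero_apply]
  · rintro ⟨t, htrace, hnondeg⟩
    let B : A →ₗ[K] Module.Dual K A := (LinearMap.mul K A).compr₂ t
    have hB : Function.Injective B := by
      rw [← LinearMap.ker_eq_bot, LinearMap.ker_eq_bot']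
      exact fun x hx => hnondeg x fun y => LinearMap.congr_fun hx y
    refine ⟨B.linearEquivOfInjective hB Subspace.dual_finrank_eq.symm, fun a x y => ?_,
      fun a x y => ?_⟩
    · simp only [LinearMap.linearEquivOfInjective_apply, B, LinearMap.compr₂_apply,
        LinearMap.mul_apply', mul_assoc, htrace a]
    · simp only [LinearMap.linearEquivOfInjective_apply, B, LinearMap.compr₂_apply,
        LinearMap.mul_apply', mul_assoc]

end SymmetricAlgebra

namespace Aq

variable {K : Type} [Field K] {n : ℕ} (q : Fin n → Fin n → K)

noncomputable def X (i : Fin n) : Aq K n q :=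
  RingQuot.mkAlgHom K (AqRel K n q) (FreeAlgebra.ι K i)

noncomputable def mon (S : Finset (Fin n)) : Aq K n q :=
  ((S.sort (· ≤ ·)).map (X q)).prod

/-- The scalar in `mon q S * mon q T = twist q S T • mon q (S ∪ T)` for disjoint `S` and `T`. -/
def twist (S T : Finset (Fin n)) : K :=
  ∏ a ∈ S, ∏ b ∈ T, if b < a then q b a else 1

variable {q}

section Twist

lemma twist_ne_zero (hq : ∀ i j : Fin n, i < j → q i j ≠ 0) (S T : Finset (Fin n)) :
    twist q S T ≠ 0 :=
  prod_ne_zero_iff.2 fun a _ => prod_ne_zero_iff.2 fun b _ => by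
    split_ifs with h
    exacts [hq b a h, one_ne_zero]

lemma twist_empty_left (T : Finset (Fin n)) : twist q ∅ T = 1 := prod_empty

lemma twist_union_left {S T : Finset (Fin n)} (h : Disjoint S T) (U : Finset (Fin n)) :
    twist q (S ∪ T) U = twist q S U * twist q T U :=
  prod_union h

lemma twist_union_right (S : Finset (Fin n)) {T U : Finset (Fin n)} (h : Disjoint T U) :
    twist q S (T ∪ U) = twist q S T * twist q S U := by
  simp only [twist, prod_union h, prod_mul_distrib]

lemma twist_insert_left {a : Fin n} {S : Finset (Fin n)} (ha : a ∉ S) (T : Finset (Fin n)) :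
    twist q (insert a S) T = twist q {a} T * twist q S T := by
  rw [insert_eq, twist_union_left (disjoint_singleton_left.2 ha)]

lemma twist_singleton_insert (a : Fin n) {b : Fin n} {T : Finset (Fin n)} (hb : b ∉ T) :
    twist q {a} (insert b T) = (if b < a then q b a else 1) * twist q {a} T := by
  simp only [twist, prod_singleton, prod_insert hb]

lemma twist_singleton_self (a : Fin n) : twist q {a} {a} = 1 := by
  simp [twist]

lemma twist_singleton_of_lt {a : Fin n} {T : Finset (Fin n)} (h : ∀ b ∈ T, a < b) :
    twist q {a} T = 1 := by
  simp only [twist, prod_singleton]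
  exact prod_eq_one fun b hb => if_neg (h b hb).not_gt

lemma prod_twist_singleton_left (S T : Finset (Fin n)) :
    ∏ a ∈ S, twist q {a} T = twist q S T := by
  simp only [twist, prod_singleton]

lemma prod_twist_singleton_right (S T : Finset (Fin n)) :
    ∏ b ∈ T, twist q S {b} = twist q S T := by
  simp only [twist, prod_singleton]
  exact prod_comm

lemma twist_singleton_univ (i : Fin n) :
    twist q {i} univ = ∏ p ∈ univ.filter (fun p : Fin n => p < i), q p i := by
  rw [twist, prod_singleton, prod_filter]

lemma twist_univ_singleton (i : Fin n) :
    twist q univ {i} = ∏ p ∈ univ.filter (fun p : Fin n => i < p), q i p := by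
  simp only [twist, prod_singleton, prod_filter]

lemma twist_singleton_compl (a : Fin n) : twist q {a} {a}ᶜ = twist q {a} univ := by
  rw [← union_compl {a}, twist_union_right _ disjoint_compl_right, twist_singleton_self, one_mul]

lemma twist_compl_singleton (a : Fin n) : twist q {a}ᶜ {a} = twist q univ {a} := by
  rw [← union_compl {a}, twist_union_left disjoint_compl_right, twist_singleton_self, one_mul]

lemma twist_compl_comm (hq : ∀ i j : Fin n, i < j → q i j ≠ 0)
    (h : ∀ a, twist q {a} univ = twist q univ {a}) (S : Finset (Fin n)) :
    twist q S Sᶜ = twist q Sᶜ S := by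
  have hS : twist q S univ = twist q univ S := by
    rw [← prod_twist_singleton_left, ← prod_twist_singleton_right]
    exact prod_congr rfl fun a _ => h a
  rw [← union_compl S, twist_union_right _ disjoint_compl_right,
    twist_union_left disjoint_compl_right] at hS
  exact mul_left_cancel₀ (twist_ne_zero hq S S) hS

lemma forall_twist_singleton_univ_of_forall_ne (hq : ∀ i j : Fin n, i < j → q i j ≠ 0)
    (j : Fin n) (h : ∀ i ≠ j, twist q {i} univ = twist q univ {i}) (i : Fin n) :
    twist q {i} univ = twist q univ {i} := by
  rcases eq_or_ne i j with rfl | hij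
  · have hprod : ∏ i, twist q {i} univ = ∏ i, twist q univ {i} := by
      rw [prod_twist_singleton_left, prod_twist_singleton_right]
    rw [← mul_prod_erase univ _ (mem_univ i), ← mul_prod_erase univ (fun i => twist q univ {i})
      (mem_univ i), prod_congr rfl fun k hk => h k (ne_of_mem_erase hk)] at hprod
    exact mul_right_cancel₀ (prod_ne_zero_iff.2 fun k _ => twist_ne_zero hq _ _) hprod
  · exact h i hij

end Twist

section Monomials

lemma X_mul_X_of_lt {i j : Fin n} (h : i < j) : X q j * X q i = q i j • (X q i * X q j) := by
  simpa [X] using RingQuot.mkAlgHom_rel K (AqRel.comm (q := q) i j h)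

lemma X_mul_self (i : Fin n) : X q i * X q i = 0 := by
  simpa [X] using RingQuot.mkAlgHom_rel K (AqRel.sq (q := q) i)

lemma mon_empty : mon q (∅ : Finset (Fin n)) = 1 := by
  simp [mon]

lemma mon_insert {a : Fin n} {S : Finset (Fin n)} (h : ∀ b ∈ S, a < b) :
    mon q (insert a S) = X q a * mon q S := by
  rw [mon, sort_insert _ (fun b hb => (h b hb).le) fun ha => (h a ha).false, List.map_cons,
    List.prod_cons, mon]

lemma mon_singleton (i : Fin n) : mon q {i} = X q i := by
  rw [← insert_empty, mon_insert (by simp), mon_empty, mul_one]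

lemma X_mul_mon (i : Fin n) (S : Finset (Fin n)) :
    X q i * mon q S = if i ∈ S then 0 else twist q {i} S • mon q (insert i S) := by
  induction S using Finset.induction_on_min with
  | empty => rw [if_neg (notMem_empty i), twist_singleton_of_lt (by simp), one_smul,
      mon_insert (by simp)]
  | insert a S haS ih =>
    have ha : a ∉ S := fun h => (haS a h).false
    rw [mon_insert haS]
    rcases lt_trichotomy i a with hia | rfl | hai
    · have hiS : ∀ b ∈ insert a S, i < b := by
        simpa [hia] using fun b hb => hia.trans (haS b hb)
      rw [if_neg fun h => (hiS i h).false, twist_singleton_of_lt hiS, one_smul,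
        mon_insert hiS, mon_insert haS]
    · rw [← mul_assoc, X_mul_self, zero_mul, if_pos (mem_insert_self _ _)]
    · rw [← mul_assoc, X_mul_X_of_lt hai, smul_mul_assoc, mul_assoc, ih]
      by_cases hiS : i ∈ S
      · rw [if_pos hiS, mul_zero, smul_zero, if_pos (mem_insert_of_mem hiS)]
      · have haiS : ∀ b ∈ insert i S, a < b := by simpa [hai] using haS
        rw [if_neg hiS, if_neg (by simp [hiS, hai.ne']), mul_smul_comm, ← mon_insert haiS,
          smul_smul, insert_comm, twist_singleton_insert _ ha, if_pos hai]

lemma mon_mul_mon (S T : Finset (Fin n)) :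
    mon q S * mon q T = if Disjoint S T then twist q S T • mon q (S ∪ T) else 0 := by
  induction S using Finset.induction_on_min with
  | empty => rw [mon_empty, one_mul, if_pos (disjoint_empty_left T), empty_union,
      twist_empty_left, one_smul]
  | insert a S haS ih =>
    have ha : a ∉ S := fun h => (haS a h).false
    rw [mon_insert haS, mul_assoc, ih]
    by_cases hST : Disjoint S T
    · rw [if_pos hST, mul_smul_comm, X_mul_mon, insert_union]
      by_cases haT : a ∈ T
      · rw [if_pos (mem_union_right S haT), smul_zero,
          if_neg fun h => (disjoint_insert_left.1 h).1 haT]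
      · rw [if_neg (by simp [ha, haT]), if_pos (disjoint_insert_left.2 ⟨haT, hST⟩), smul_smul,
          twist_insert_left ha, twist_union_right _ hST, twist_singleton_of_lt haS, one_mul,
          mul_comm]
    · rw [if_neg hST, mul_zero, if_neg fun h => hST (disjoint_insert_left.1 h).2]

end Monomials

section Basis

variable (q) in
/-- The action of `X q i` on monomials predicted by `X_mul_mon`, on a space with basis indexed by
`Finset (Fin n)`; this representation shows that the monomials are linearly independent. -/
noncomputable def modelX (i : Fin n) : Module.End K (Finset (Fin n) → K) :=
  (Pi.basisFun K (Finset (Fin n))).constr K fun S =>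
    if i ∈ S then 0 else twist q {i} S • Pi.single (insert i S) 1

lemma modelX_single (i : Fin n) (S : Finset (Fin n)) :
    modelX q i (Pi.single S 1) =
      if i ∈ S then 0 else twist q {i} S • Pi.single (insert i S) 1 := by
  rw [modelX, ← Pi.basisFun_apply, Module.Basis.constr_basis]

lemma modelX_mul_self (i : Fin n) : modelX q i * modelX q i = 0 := by
  refine (Pi.basisFun K _).ext fun S => ?_
  rw [Pi.basisFun_apply, Module.End.mul_apply, modelX_single, LinearMap.zero_apply]
  split_ifs with hi
  · exact map_zero _
  · rw [map_smul, modelX_single, if_pos (mem_insert_self i S), smul_zero]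

lemma modelX_mul_modelX_of_lt {i j : Fin n} (h : i < j) :
    modelX q j * modelX q i = q i j • (modelX q i * modelX q j) := by
  refine (Pi.basisFun K _).ext fun S => ?_
  rw [Pi.basisFun_apply, LinearMap.smul_apply, Module.End.mul_apply, Module.End.mul_apply,
    modelX_single, modelX_single]
  by_cases hi : i ∈ S
  · by_cases hj : j ∈ S <;> simp [hi, hj, modelX_single]
  by_cases hj : j ∈ S
  · simp [hi, hj, modelX_single]
  simp only [hi, hj, if_false, map_smul, modelX_single, mem_insert, h.ne, h.ne', or_self,
    twist_singleton_insert _ hi, twist_singleton_insert _ hj, if_pos h, if_neg h.not_gt,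
    one_mul, smul_smul, insert_comm i j]
  rw [mul_left_comm, mul_comm (twist q {j} S)]

variable (q) in
noncomputable def modelRep : Aq K n q →ₐ[K] Module.End K (Finset (Fin n) → K) :=
  RingQuot.liftAlgHom K ⟨FreeAlgebra.lift K (modelX q), fun _ _ h => by
    cases h with
    | comm i j hij => simpa using modelX_mul_modelX_of_lt hij
    | sq i => simpa using modelX_mul_self i⟩

lemma modelRep_X (i : Fin n) : modelRep q (X q i) = modelX q i := by
  rw [X, modelRep, RingQuot.liftAlgHom_mkAlgHom_apply, FreeAlgebra.lift_ι_apply]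

lemma modelRep_mon_single_empty (S : Finset (Fin n)) :
    modelRep q (mon q S) (Pi.single ∅ 1) = Pi.single S 1 := by
  induction S using Finset.induction_on_min with
  | empty => rw [mon_empty, map_one, Module.End.one_apply]
  | insert a S haS ih =>
    rw [mon_insert haS, map_mul, Module.End.mul_apply, ih, modelRep_X, modelX_single,
      if_neg fun h => (haS a h).false, twist_singleton_of_lt haS, one_smul]

lemma linearIndependent_mon : LinearIndependent K (mon q) := by
  refine LinearIndependent.of_comp
    ((LinearMap.applyₗ (Pi.single ∅ 1)).comp (modelRep q).toLinearMap) ?_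
  convert (Pi.basisFun K (Finset (Fin n))).linearIndependent using 1
  ext S : 1
  simp [modelRep_mon_single_empty]

lemma mem_span_mon (x : Aq K n q) : x ∈ Submodule.span K (Set.range (mon q)) := by
  set V := Submodule.span K (Set.range (mon q))
  have hmul : ∀ y ∈ V, ∀ z ∈ V, y * z ∈ V := by
    have hVV : V * V ≤ V := by
      rw [Submodule.span_mul_span, Submodule.span_le]
      rintro _ ⟨_, ⟨S, rfl⟩, _, ⟨T, rfl⟩, rfl⟩
      change mon q S * mon q T ∈ V
      rw [mon_mul_mon]
      split_ifs
      exacts [V.smul_mem _ (Submodule.subset_span ⟨_, rfl⟩), V.zero_mem]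
    exact fun y hy z hz => hVV (Submodule.mul_mem_mul hy hz)
  obtain ⟨a, rfl⟩ := RingQuot.mkAlgHom_surjective K (AqRel K n q) x
  induction a using FreeAlgebra.induction with
  | grade0 r =>
    rw [AlgHom.commutes, Algebra.algebraMap_eq_smul_one, ← mon_empty]
    exact V.smul_mem r (Submodule.subset_span ⟨∅, rfl⟩)
  | grade1 i => exact Submodule.subset_span ⟨{i}, mon_singleton i⟩
  | mul a b ha hb => rw [map_mul]; exact hmul _ ha _ hb
  | add a b ha hb => rw [map_add]; exact V.add_mem ha hb

variable (q) in
noncomputable def monBasis : Module.Basis (Finset (Fin n)) K (Aq K n q) :=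
  Module.Basis.mk linearIndependent_mon fun x _ => mem_span_mon x

@[simp]
lemma monBasis_apply (S : Finset (Fin n)) : monBasis q S = mon q S :=
  Module.Basis.mk_apply _ _ _

instance : FiniteDimensional K (Aq K n q) := .of_basis (monBasis q)

end Basis

section Trace

lemma mon_mul_mon_compl (S : Finset (Fin n)) :
    mon q S * mon q Sᶜ = twist q S Sᶜ • mon q univ := by
  rw [mon_mul_mon, if_pos disjoint_compl_right, union_compl]

lemma coord_univ_mon (S : Finset (Fin n)) :
    (monBasis q).coord univ (mon q S) = if S = univ then 1 else 0 := by
  rw [← monBasis_apply, Module.Basis.coord_apply, Module.Basis.repr_self, Finsupp.single_apply]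

lemma coord_univ_mon_mul_mon (S T : Finset (Fin n)) :
    (monBasis q).coord univ (mon q S * mon q T) = if T = Sᶜ then twist q S Sᶜ else 0 := by
  by_cases hT : T = Sᶜ
  · rw [if_pos hT, hT, mon_mul_mon_compl, map_smul, coord_univ_mon, if_pos rfl, smul_eq_mul,
      mul_one]
  rw [if_neg hT, mon_mul_mon]
  split_ifs with hST
  · rw [map_smul, coord_univ_mon, if_neg, smul_zero]
    exact fun hU => hT (IsCompl.eq_compl ⟨hST.symm, codisjoint_iff.2 (by simpa [union_comm])⟩)
  · exact map_zero _

lemma coord_univ_mul_mon_compl (x : Aq K n q) (S : Finset (Fin n)) :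
    (monBasis q).coord univ (x * mon q Sᶜ) = (monBasis q).coord S x * twist q S Sᶜ := by
  have h : (monBasis q).coord univ ∘ₗ LinearMap.mulRight K (mon q Sᶜ) =
      twist q S Sᶜ • (monBasis q).coord S := by
    refine (monBasis q).ext fun T => ?_
    rw [LinearMap.comp_apply, LinearMap.mulRight_apply, LinearMap.smul_apply, monBasis_apply,
      coord_univ_mon_mul_mon, ← monBasis_apply, Module.Basis.coord_apply,
      Module.Basis.repr_self, Finsupp.single_apply]
    by_cases hTS : T = S
    · rw [hTS, if_pos rfl, if_pos rfl, smul_eq_mul, mul_one]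
    · rw [if_neg (compl_inj_iff.not.2 (Ne.symm hTS)), if_neg hTS, smul_zero]
  rw [← LinearMap.mulRight_apply (R := K), ← LinearMap.comp_apply, h, LinearMap.smul_apply,
    smul_eq_mul, mul_comm]

lemma isSymmetrizingTrace_coord_univ (hq : ∀ i j : Fin n, i < j → q i j ≠ 0)
    (h : ∀ a, twist q {a} univ = twist q univ {a}) :
    IsSymmetrizingTrace ((monBasis q).coord univ) := by
  set t := (monBasis q).coord univ
  constructor
  · let B : Aq K n q →ₗ[K] Aq K n q →ₗ[K] K := (LinearMap.mul K _).compr₂ t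
    have hB : B = B.flip := by
      refine LinearMap.ext_basis (monBasis q) (monBasis q) fun S T => ?_
      simp only [B, LinearMap.flip_apply, LinearMap.compr₂_apply, LinearMap.mul_apply',
        monBasis_apply, t, coord_univ_mon_mul_mon]
      by_cases hT : T = Sᶜ
      · rw [if_pos hT, if_pos (eq_compl_comm.1 hT), hT, compl_compl, twist_compl_comm hq h]
      · rw [if_neg hT, if_neg fun hS => hT (eq_compl_comm.1 hS)]
    exact fun x y => LinearMap.congr_fun₂ hB x y
  · refine fun x hx => (monBasis q).forall_coord_eq_zero_iff.1 fun S => ?_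
    have hS := coord_univ_mul_mon_compl x S
    rw [hx] at hS
    exact (mul_eq_zero.1 hS.symm).resolve_right (twist_ne_zero hq S Sᶜ)

lemma apply_mon_univ_ne_zero_of_isSymmetrizingTrace {t : Module.Dual K (Aq K n q)}
    (ht : IsSymmetrizingTrace t) : t (mon q univ) ≠ 0 := by
  intro h0
  refine (monBasis q).ne_zero univ (ht.2 _ fun y => ?_)
  have hzero : t ∘ₗ LinearMap.mulLeft K (mon q univ) = 0 := by
    refine (monBasis q).ext fun S => ?_
    rw [LinearMap.comp_apply, LinearMap.mulLeft_apply, monBasis_apply, mon_mul_mon,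
      union_eq_left.2 (subset_univ S), LinearMap.zero_apply]
    split_ifs
    · rw [map_smul, h0, smul_zero]
    · exact map_zero t
  rw [monBasis_apply]
  exact LinearMap.congr_fun hzero y

lemma twist_singleton_univ_of_isSymmetrizingTrace {t : Module.Dual K (Aq K n q)}
    (ht : IsSymmetrizingTrace t) (a : Fin n) : twist q {a} univ = twist q univ {a} := by
  have hcomm := ht.1 (mon q {a}) (mon q {a}ᶜ)
  have hswap := mon_mul_mon_compl (q := q) {a}ᶜ
  rw [compl_compl] at hswap
  rw [mon_mul_mon_compl, hswap, map_smul, map_smul, smul_eq_mul, smul_eq_mul] at hcomm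
  rw [← twist_singleton_compl, ← twist_compl_singleton]
  exact mul_right_cancel₀ (apply_mon_univ_ne_zero_of_isSymmetrizingTrace ht) hcomm

theorem exists_isSymmetrizingTrace_iff (hq : ∀ i j : Fin n, i < j → q i j ≠ 0) :
    (∃ t : Module.Dual K (Aq K n q), IsSymmetrizingTrace t) ↔
      ∀ a, twist q {a} univ = twist q univ {a} :=
  ⟨fun ⟨_, ht⟩ => twist_singleton_univ_of_isSymmetrizingTrace ht,
    fun h => ⟨_, isSymmetrizingTrace_coord_univ hq h⟩⟩

end Trace

lemma twist_singleton_univ_eq_iff (hq : ∀ i j : Fin n, i < j → q i j ≠ 0) {i : Fin n}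
    (hi : (i : ℕ) < n - 1) :
    twist q {i} univ = twist q univ {i} ↔
      q i ⟨n - 1, by omega⟩ =
        (∏ p ∈ univ.filter (fun p : Fin n => p < i), q p i) *
        ∏ p ∈ univ.filter (fun p : Fin n => i < p ∧ (p : ℕ) < n - 1), (q i p)⁻¹ := by
  set last : Fin n := ⟨n - 1, by omega⟩
  have hsplit : univ.filter (fun p : Fin n => i < p) =
      insert last (univ.filter fun p : Fin n => i < p ∧ (p : ℕ) < n - 1) := by
    ext p
    simp only [mem_filter, mem_univ, true_and, mem_insert, Fin.lt_def, Fin.ext_iff, last]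
    omega
  have hlast : last ∉ univ.filter fun p : Fin n => i < p ∧ (p : ℕ) < n - 1 := by
    simp [last]
  rw [twist_singleton_univ, twist_univ_singleton, hsplit, prod_insert hlast, prod_inv_distrib,
    eq_mul_inv_iff_mul_eq₀ (prod_ne_zero_iff.2 fun p hp => hq _ _ (mem_filter.1 hp).2.1),
    eq_comm]

end Aq

-- Indices are `0`-based: `⟨n - 1, _⟩` is the paper's `n`; `i < n - 1` is `1 ≤ i ≤ n - 1`.
open Aq in
/-- **Proposition C (i).**  `A(q)` is a symmetric algebra (`A ≅ A*` as `A`-bimodules,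
unfolded via `φ(a·x)(y) = φ(x)(y·a)` and `φ(x·a)(y) = φ(x)(a·y)`) if and only if for
every `1 ≤ i ≤ n−1` (here: every index `i` with `i < n-1` in `0`-based indexing, the
last index `⟨n-1,_⟩` playing the role of `n`):
`q_{in} = (∏_{p<i} q_{pi}) · (∏_{i<p≤n−1} q_{ip}⁻¹)`. -/
theorem stmt11 (K : Type) [Field K] (n : ℕ) (hn : 2 ≤ n)
    (q : Fin n → Fin n → K) (hq : ∀ i j : Fin n, i < j → q i j ≠ 0) :
    (∃ φ : Aq K n q ≃ₗ[K] Module.Dual K (Aq K n q),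
        (∀ a x y : Aq K n q, φ (a * x) y = φ x (y * a)) ∧
        (∀ a x y : Aq K n q, φ (x * a) y = φ x (a * y))) ↔
    (∀ i : Fin n, (i : ℕ) < n - 1 →
        q i ⟨n - 1, by omega⟩ =
          (∏ p ∈ univ.filter (fun p : Fin n => p < i), q p i) *
          (∏ p ∈ univ.filter (fun p : Fin n => i < p ∧ (p : ℕ) < n - 1), (q i p)⁻¹)) := by
  rw [exists_bimodule_dual_equiv_iff, exists_isSymmetrizingTrace_iff hq]
  refine ⟨fun h i hi => (twist_singleton_univ_eq_iff hq hi).1 (h i), fun h => ?_⟩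
  refine forall_twist_singleton_univ_of_forall_ne hq ⟨n - 1, by omega⟩ fun i hi => ?_
  have hi' : (i : ℕ) < n - 1 := by
    have : (i : ℕ) ≠ n - 1 := fun h => hi (Fin.ext h)
    omega
  exact (twist_singleton_univ_eq_iff hq hi').2 (h i hi')
end

section
/- The exterior algebra ΛV of an n-dimensional vector space V (n ≥ 2, over a field of characteristic ≠ 2) is a symmetric algebra if and only if n is odd. -/
/-!
A finite-dimensional algebra is symmetric iff it carries a trace form `f` (`f (x * y) = f (y * x)`)
whose pairing `(x, y) ↦ f (x * y)` is nondegenerate; then `φ x = f (x * ·)`.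

In `ΛV`, homogeneous elements graded-commute: `x * y = (-1) ^ (k * l) • (y * x)` for `x ∈ ΛᵏV`,
`y ∈ ΛˡV`. Fix a basis of `V` and the induced monomial basis `(e_S)` of `ΛV`. If `n` is odd, the
coefficient of the top monomial `e_univ` is a trace: it only sees products of total degree `n`,
where `k * l` is even. It is nondegenerate because `e_S * e_Sᶜ = ±e_univ`, while `e_T * e_Sᶜ` has
no top coefficient for `T ≠ S`. If `n` is even, every trace `f` kills `ΛⁿV`: for `v ∈ V` and
`x ∈ Λⁿ⁻¹V`, `f (v * x) = f (x * v) = -f (v * x)`, and `2 ≠ 0`. Since `e_univ` annihilates every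
monomial of positive degree, `f (e_univ * y) = 0` for all `y`, so no trace is nondegenerate.
-/

open Module

/-- Symmetric in the sense of Frobenius algebras: `A ≅ A*` as `A`-bimodules (not to be confused
with `IsSymmetricAlgebra`, the universal property of `SymmetricAlgebra`). -/
def Algebra.IsSymmetricFrobenius (K A : Type*) [CommRing K] [Ring A] [Algebra K A] : Prop :=
  ∃ φ : A ≃ₗ[K] Dual K A,
    (∀ a x y : A, φ (a * x) y = φ x (y * a)) ∧ (∀ a x y : A, φ (x * a) y = φ x (a * y))

theorem Algebra.isSymmetricFrobenius_iff_exists_trace (K A : Type*) [Field K] [Ring A]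
    [Algebra K A] [FiniteDimensional K A] :
    Algebra.IsSymmetricFrobenius K A ↔ ∃ f : Dual K A, (∀ x y, f (x * y) = f (y * x)) ∧
      Function.Injective ((LinearMap.mul K A).compr₂ f) := by
  constructor
  · rintro ⟨φ, hleft, hright⟩
    have hφ : ∀ x y, φ x y = φ 1 (x * y) := fun x y => by
      simpa using hright x 1 y
    refine ⟨φ 1, fun x y => ?_, fun x x' h => φ.injective ?_⟩
    · rw [← hφ, ← mul_one x, hleft, mul_one]
    · ext y
      simpa [hφ] using LinearMap.congr_fun h y
  · rintro ⟨f, htrace, hinj⟩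
    refine ⟨LinearMap.linearEquivOfInjective _ hinj Subspace.dual_finrank_eq.symm, ?_, ?_⟩
    · intro a x y
      simp [mul_assoc, htrace a]
    · intro a x y
      simp [mul_assoc]

namespace ExteriorAlgebra

variable {R M : Type*} [CommRing R] [AddCommGroup M] [Module R M]

theorem ι_mul_ι_comm (u v : M) : ι R u * ι R v = -(ι R v * ι R u) :=
  eq_neg_of_add_eq_zero_left (ι_add_mul_swap u v)

theorem mul_ι_of_mem_exteriorPower {k : ℕ} {x : ExteriorAlgebra R M} (hx : x ∈ ⋀[R]^k M)
    (v : M) : x * ι R v = (-1 : R) ^ k • (ι R v * x) := by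
  induction hx using Submodule.pow_induction_on_left' with
  | algebraMap r => simp [Algebra.commutes]
  | add x y i _ _ hx hy => simp [add_mul, mul_add, hx, hy]
  | mem_mul m hm i x _ ih =>
    obtain ⟨u, rfl⟩ := hm
    rw [mul_assoc, ih, mul_smul_comm, ← mul_assoc, ← mul_assoc, ι_mul_ι_comm u v, pow_succ]
    simp

theorem mul_comm_of_mem_exteriorPower {k l : ℕ} {x y : ExteriorAlgebra R M}
    (hx : x ∈ ⋀[R]^k M) (hy : y ∈ ⋀[R]^l M) : x * y = (-1 : R) ^ (k * l) • (y * x) := by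
  induction hx using Submodule.pow_induction_on_left' with
  | algebraMap r => simp [Algebra.commutes]
  | add x x' i _ _ hx hx' => simp [add_mul, mul_add, hx, hx']
  | mem_mul m hm i x _ ih =>
    obtain ⟨u, rfl⟩ := hm
    rw [mul_assoc, ih, mul_smul_comm, ← mul_assoc, ← mul_assoc, mul_ι_of_mem_exteriorPower hy u,
      smul_mul_assoc, smul_smul, ← pow_add, Nat.succ_mul, add_assoc, ← two_mul, pow_add,
      (even_two_mul l).neg_one_pow, mul_one]

theorem trace_eq_zero_of_mem_exteriorPower_succ [NoZeroDivisors R] (h2 : (2 : R) ≠ 0)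
    {f : ExteriorAlgebra R M →ₗ[R] R} (hf : ∀ x y, f (x * y) = f (y * x)) {k : ℕ} (hk : Odd k)
    {x : ExteriorAlgebra R M} (hx : x ∈ ⋀[R]^(k + 1) M) : f x = 0 := by
  rw [exteriorPower, Submodule.pow_succ' _ hk.pos.ne'] at hx
  refine Submodule.mul_induction_on hx (fun m hm y hy => ?_) (fun x y hx hy => ?_)
  · obtain ⟨u, rfl⟩ := hm
    have h := hf (ι R u) y
    rw [mul_ι_of_mem_exteriorPower hy, hk.neg_one_pow, map_smul, neg_one_smul] at h
    exact (mul_eq_zero_iff_left h2).mp (by linear_combination h)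
  · rw [map_add, hx, hy, add_zero]

section Basis

open Set.powersetCard

variable {I : Type*} [LinearOrder I] (b : Basis I R M)

theorem basis_mem_exteriorPower (S : Finset I) : b.ExteriorAlgebra S ∈ ⋀[R]^S.card M := by
  have := basis_eq_coe_basis b (ofCard (rfl : S.card = S.card))
  exact this ▸ Submodule.coe_mem _

theorem basis_repr_eq_zero_of_mem_exteriorPower {k : ℕ} {x : ExteriorAlgebra R M}
    (hx : x ∈ ⋀[R]^k M) {S : Finset I} (hS : S.card ≠ k) : b.ExteriorAlgebra.repr x S = 0 := by
  rw [Basis.ExteriorAlgebra, Basis.repr_reindex_apply, prodEquiv_symm_apply]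
  exact DirectSum.IsInternal.collectedBasis_repr_of_mem_ne _ _ hS.symm hx

theorem basis_mul_basis_of_not_disjoint {S T : Finset I} (h : ¬Disjoint S T) :
    b.ExteriorAlgebra S * b.ExteriorAlgebra T = 0 :=
  basis_mul_of_not_disjoint b (ofCard rfl) (ofCard rfl) h

variable [Fintype I]

theorem exists_basis_mul_basis_compl (S : Finset I) :
    ∃ ε : ℤˣ, b.ExteriorAlgebra S * b.ExteriorAlgebra Sᶜ = ε • b.ExteriorAlgebra Finset.univ := by
  have h : Disjoint S Sᶜ := disjoint_compl_right
  have := basis_mul_of_disjoint b (ofCard rfl) (ofCard rfl) h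
  change _ = _ • b.ExteriorAlgebra (S.disjUnion Sᶜ h) at this
  rw [Finset.disjUnion_eq_union, Finset.union_compl] at this
  exact ⟨_, this⟩

theorem basis_coord_univ_eq_zero_of_mem_exteriorPower {k : ℕ} {x : ExteriorAlgebra R M}
    (hx : x ∈ ⋀[R]^k M) (hk : k ≠ Fintype.card I) : b.ExteriorAlgebra.coord Finset.univ x = 0 :=
  basis_repr_eq_zero_of_mem_exteriorPower b hx (by rwa [Finset.card_univ, ne_comm])

theorem basis_coord_univ_mul_comm (hodd : Odd (Fintype.card I)) (x y : ExteriorAlgebra R M) :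
    b.ExteriorAlgebra.coord Finset.univ (x * y) = b.ExteriorAlgebra.coord Finset.univ (y * x) := by
  set τ := b.ExteriorAlgebra.coord Finset.univ
  suffices (LinearMap.mul R _).compr₂ τ = ((LinearMap.mul R _).compr₂ τ).flip from
    LinearMap.congr_fun₂ this x y
  refine b.ExteriorAlgebra.ext fun S => b.ExteriorAlgebra.ext fun T => ?_
  have hS := basis_mem_exteriorPower b S
  have hT := basis_mem_exteriorPower b T
  simp only [LinearMap.compr₂_apply, LinearMap.flip_apply, LinearMap.mul_apply']
  by_cases hcard : S.card + T.card = Fintype.card I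
  · have heven : Even (S.card * T.card) := by
      rw [← hcard, Nat.odd_add'] at hodd
      rcases Nat.even_or_odd T.card with h | h
      · exact h.mul_left _
      · exact (hodd.mp h).mul_right _
    rw [mul_comm_of_mem_exteriorPower hS hT, heven.neg_one_pow, one_smul]
  · rw [basis_coord_univ_eq_zero_of_mem_exteriorPower b (SetLike.mul_mem_graded hS hT) hcard,
      basis_coord_univ_eq_zero_of_mem_exteriorPower b (SetLike.mul_mem_graded hT hS)
        (by rwa [add_comm])]

theorem basis_coord_univ_basis_mul_basis_compl_of_ne {S T : Finset I} (h : T ≠ S) :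
    b.ExteriorAlgebra.coord Finset.univ (b.ExteriorAlgebra T * b.ExteriorAlgebra Sᶜ) = 0 := by
  by_cases hd : Disjoint T Sᶜ
  · have hlt : T.card < S.card := Finset.card_lt_card <|
      (Finset.subset_compl_iff_disjoint_right.mpr hd |>.trans_eq (compl_compl S)).ssubset_of_ne h
    refine basis_coord_univ_eq_zero_of_mem_exteriorPower b
      (SetLike.mul_mem_graded (basis_mem_exteriorPower b T) (basis_mem_exteriorPower b Sᶜ)) ?_
    rw [Finset.card_compl]
    have := S.card_le_univ
    omega
  · rw [basis_mul_basis_of_not_disjoint b hd, map_zero]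

theorem injective_mul_compr₂_basis_coord_univ :
    Function.Injective
      ((LinearMap.mul R (ExteriorAlgebra R M)).compr₂ (b.ExteriorAlgebra.coord Finset.univ)) := by
  rw [← LinearMap.ker_eq_bot, LinearMap.ker_eq_bot']
  intro x hx
  refine b.ExteriorAlgebra.ext_elem fun S => ?_
  obtain ⟨ε, hε⟩ := exists_basis_mul_basis_compl b S
  have h := LinearMap.congr_fun hx (b.ExteriorAlgebra Sᶜ)
  simp only [LinearMap.compr₂_apply, LinearMap.mul_apply', LinearMap.zero_apply] at h
  rw [← b.ExteriorAlgebra.sum_repr x] at h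
  simp only [Finset.sum_mul, smul_mul_assoc, map_sum, map_smul] at h
  rw [Finset.sum_eq_single S
    (fun T _ hT => by rw [basis_coord_univ_basis_mul_basis_compl_of_ne b hT, smul_zero])
    (by simp), hε] at h
  simpa [smul_eq_zero_iff_eq] using h

theorem trace_basis_univ_mul_eq_zero [NoZeroDivisors R] (h2 : (2 : R) ≠ 0)
    {f : ExteriorAlgebra R M →ₗ[R] R} (hf : ∀ x y, f (x * y) = f (y * x))
    (heven : Even (Fintype.card I)) (hI : Fintype.card I ≠ 0) (y : ExteriorAlgebra R M) :
    f (b.ExteriorAlgebra Finset.univ * y) = 0 := by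
  suffices f ∘ₗ LinearMap.mulLeft R (b.ExteriorAlgebra Finset.univ) = 0 from
    LinearMap.congr_fun this y
  refine b.ExteriorAlgebra.ext fun T => ?_
  rcases T.eq_empty_or_nonempty with rfl | ⟨i, hi⟩
  · have hmem := SetLike.mul_mem_graded (basis_mem_exteriorPower b Finset.univ)
      (basis_mem_exteriorPower b ∅)
    rw [Finset.card_univ, Finset.card_empty, add_zero,
      ← Nat.sub_add_cancel (Nat.one_le_iff_ne_zero.mpr hI)] at hmem
    exact trace_eq_zero_of_mem_exteriorPower_succ h2 hf
      (Nat.Even.sub_odd (by omega) heven odd_one) hmem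
  · rw [LinearMap.comp_apply, LinearMap.mulLeft_apply, basis_mul_basis_of_not_disjoint b
      (Finset.not_disjoint_iff.mpr ⟨i, Finset.mem_univ i, hi⟩), map_zero]
    rfl

end Basis

end ExteriorAlgebra

/-- **Exterior algebra.**  The exterior algebra `ΛV` of an `n`-dimensional vector space
`V` (`n ≥ 2`, over a field of characteristic `≠ 2`) is a symmetric algebra
(`ΛV ≅ (ΛV)*` as bimodules, unfolded via `φ(a·x)(y) = φ(x)(y·a)` and
`φ(x·a)(y) = φ(x)(a·y)`) if and only if `n` is odd. -/
theorem stmt13 (K : Type) [Field K] (h2 : (2 : K) ≠ 0)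
    (V : Type) [AddCommGroup V] [Module K V] [FiniteDimensional K V]
    (n : ℕ) (hn : 2 ≤ n) (hdim : Module.finrank K V = n) :
    (∃ φ : ExteriorAlgebra K V ≃ₗ[K] Module.Dual K (ExteriorAlgebra K V),
        (∀ a x y : ExteriorAlgebra K V, φ (a * x) y = φ x (y * a)) ∧
        (∀ a x y : ExteriorAlgebra K V, φ (x * a) y = φ x (a * y))) ↔
    Odd n := by
  let b := Module.finBasisOfFinrankEq K V hdim
  have : FiniteDimensional K (ExteriorAlgebra K V) := .of_basis b.ExteriorAlgebra
  change Algebra.IsSymmetricFrobenius K (ExteriorAlgebra K V) ↔ Odd n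
  rw [Algebra.isSymmetricFrobenius_iff_exists_trace, ← Fintype.card_fin n]
  constructor
  · rintro ⟨f, htrace, hinj⟩
    by_contra hodd
    have hzero := ExteriorAlgebra.trace_basis_univ_mul_eq_zero b h2 htrace
      (Nat.not_odd_iff_even.mp hodd) (by rw [Fintype.card_fin]; omega)
    refine b.ExteriorAlgebra.ne_zero Finset.univ (hinj (a₂ := 0) (LinearMap.ext fun y => ?_))
    simpa using hzero y
  · exact fun hodd => ⟨_, ExteriorAlgebra.basis_coord_univ_mul_comm b hodd,
      ExteriorAlgebra.injective_mul_compr₂_basis_coord_univ b⟩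
end

section
/- Let M_n(K) carry a good G-grading determined by elements g_1,...,g_n ∈ G, so that the matrix unit e_{ij} is homogeneous of degree g_i g_j^{-1}. Then M_n(K) with this grading is graded symmetric: there exists a family α indexed by J_ε = {(k,ℓ) : g_k = g_ℓ} such that the ε-paratrophic matrix P(ε,α) is symmetric and invertible (equivalently, M_n(K)* ≅ M_n(K) as graded bimodules). -/
open Finset

/-- **Good gradings on matrix algebras.**  Let `M_n(K)` carry the good `G`-grading
determined by `g_1,…,g_n ∈ G` (so `e_{ij}` is homogeneous of degree `g_i g_j⁻¹`, with
structure constants `c_{(i,j),(p,q),(r,s)} = δ_{jp}·δ_{(r,s),(i,q)}`).  Then there is a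
family `α` indexed by `J_ε = {(k,ℓ) : g_k = g_ℓ}` such that the ε-paratrophic matrix
`P(ε,α)` is symmetric and invertible; hence `M_n(K)` is graded symmetric. -/
theorem stmt14 (K : Type) [Field K] (n : ℕ) (hn : 1 ≤ n)
    (G : Type) [Group G] [DecidableEq G] (gs : Fin n → G) :
    ∃ α : Fin n × Fin n → K,
      (Matrix.of fun ij pq : Fin n × Fin n =>
          ∑ kl ∈ univ.filter (fun kl : Fin n × Fin n => gs kl.1 = gs kl.2),
            α kl * (if ij.2 = pq.1 ∧ kl.1 = ij.1 ∧ kl.2 = pq.2 then (1 : K) else 0)).IsSymm ∧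
      IsUnit (Matrix.of fun ij pq : Fin n × Fin n =>
          ∑ kl ∈ univ.filter (fun kl : Fin n × Fin n => gs kl.1 = gs kl.2),
            α kl * (if ij.2 = pq.1 ∧ kl.1 = ij.1 ∧ kl.2 = pq.2 then (1 : K) else 0)) := by
  refine ⟨fun kl => if kl.1 = kl.2 then 1 else 0, ?_⟩
  have hM : (Matrix.of fun ij pq : Fin n × Fin n =>
      ∑ kl ∈ univ.filter (fun kl : Fin n × Fin n => gs kl.1 = gs kl.2),
        (if kl.1 = kl.2 then (1 : K) else 0) *
          (if ij.2 = pq.1 ∧ kl.1 = ij.1 ∧ kl.2 = pq.2 then (1 : K) else 0)) =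
      Matrix.of fun ij pq : Fin n × Fin n =>
        if ij.1 = pq.2 ∧ ij.2 = pq.1 then (1 : K) else 0 := by
    ext ⟨i, j⟩ ⟨p, q⟩
    simp only [Matrix.of_apply]
    rw [Finset.sum_eq_single (i, q)]
    · by_cases hiq : i = q <;> by_cases hjp : j = p <;> simp [hiq, hjp]
    · rintro ⟨k, l⟩ _ hne
      by_cases h : j = p ∧ k = i ∧ l = q
      · exact absurd (Prod.ext h.2.1 h.2.2) hne
      · simp [h]
    · intro hnm
      have : gs i ≠ gs q := by simpa using hnm
      have hiq : i ≠ q := fun h => this (by rw [h])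
      simp [hiq]
  rw [hM]
  constructor
  · ext ⟨i, j⟩ ⟨p, q⟩
    simp only [Matrix.IsSymm, Matrix.transpose_apply, Matrix.of_apply]
    by_cases h1 : i = q <;> by_cases h2 : j = p <;> simp [h1, h2, eq_comm]
  · have h : (Matrix.of fun ij pq : Fin n × Fin n =>
        if ij.1 = pq.2 ∧ ij.2 = pq.1 then (1 : K) else 0) *
        (Matrix.of fun ij pq : Fin n × Fin n =>
        if ij.1 = pq.2 ∧ ij.2 = pq.1 then (1 : K) else 0) = 1 := by
      ext ⟨i, j⟩ ⟨p, q⟩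
      rw [Matrix.mul_apply]
      rw [Fintype.sum_prod_type]
      simp only [Matrix.of_apply, Matrix.one_apply]
      by_cases h1 : i = p <;> by_cases h2 : j = q <;>
        simp [h1, h2, ite_and, Finset.sum_ite_eq, Finset.sum_ite_eq', Prod.ext_iff] <;>
        intro a b <;> aesop
    exact ⟨⟨_, _, h, h⟩, rfl⟩
end

section
/- A finite-dimensional G-graded algebra A is left σ-faithful (for all g ∈ G and a ∈ A_g, A_{σg^{-1}}·a = 0 implies a = 0) if and only if rank C_g = |J_g| for every g ∈ G. -/
/-!
Identify `A_g` with `K^{J_g}` through the basis. For `a ∈ A_g` with coordinate vector `x`, the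
`(r, ℓ)`-entry of `C_g x` is the `ℓ`-th coordinate of `e_r a`. As `e_r a ∈ A_σ`, its coordinates
outside `J_σ` vanish anyway, so `C_g x = 0` says exactly that `A_{σg⁻¹} a = 0`. Hence left
σ-faithfulness in degree `g` is injectivity of `C_g`, i.e. `rank C_g = |J_g|` by rank–nullity.
-/

open scoped Matrix

theorem Matrix.rank_eq_card_iff_forall_mulVec_eq_zero {K m n : Type*} [Field K] [Fintype n]
    (M : Matrix m n K) : M.rank = Fintype.card n ↔ ∀ x, M *ᵥ x = 0 → x = 0 := by
  have h := LinearMap.finrank_range_add_finrank_ker M.mulVecLin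
  rw [Module.finrank_fintype_fun_eq_card] at h
  rw [Matrix.rank, ← Matrix.ker_mulVecLin_eq_bot_iff, ← Submodule.finrank_eq_zero]
  omega

theorem forall_mem_span_mul_eq_zero_iff {K A : Type*} [CommSemiring K] [Semiring A] [Algebra K A]
    {S : Set A} {a : A} : (∀ b ∈ Submodule.span K S, b * a = 0) ↔ ∀ b ∈ S, b * a = 0 :=
  ⟨fun h b hb => h b (Submodule.subset_span hb), fun h _ hb =>
    (Submodule.span_le (p := LinearMap.ker (LinearMap.mulRight K a))).mpr h hb⟩

namespace Module.Basis

section Span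

variable {ι R M : Type*} [Semiring R] [AddCommMonoid M] [Module R M] (b : Basis ι R M)
  {s : Set ι} {x : M}

theorem repr_eq_zero_of_mem_span_image (hx : x ∈ Submodule.span R (b '' s)) {i : ι}
    (hi : i ∉ s) : b.repr x i = 0 :=
  Finsupp.notMem_support_iff.mp fun hi' => hi (b.mem_span_image.mp hx hi')

theorem eq_zero_of_mem_span_image (hx : x ∈ Submodule.span R (b '' s))
    (h : ∀ i ∈ s, b.repr x i = 0) : x = 0 := by
  refine b.repr.injective (Finsupp.ext fun i => ?_)
  by_cases hi : i ∈ s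
  · simp [h i hi]
  · simp [b.repr_eq_zero_of_mem_span_image hx hi]

end Span

section Algebra

variable {K A J : Type*} [CommSemiring K] [Semiring A] [Algebra K A] (e : Basis J K A)

theorem repr_mul_sum_smul {κ : Type*} [Fintype κ] (a : A) (v : κ → A) (x : κ → K) (ℓ : J) :
    e.repr (a * ∑ j, x j • v j) ℓ = ∑ j, e.repr (a * v j) ℓ * x j := by
  simp [Finset.mul_sum, mul_comm]

theorem forall_repr_mul_eq_zero_iff {R L : Set J} {a : A}
    (h_mem : ∀ r ∈ R, e r * a ∈ Submodule.span K (e '' L)) :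
    (∀ r ∈ R, ∀ ℓ ∈ L, e.repr (e r * a) ℓ = 0) ↔ ∀ b ∈ Submodule.span K (e '' R), b * a = 0 := by
  rw [forall_mem_span_mul_eq_zero_iff, Set.forall_mem_image]
  exact forall₂_congr fun r hr =>
    ⟨e.eq_zero_of_mem_span_image (h_mem r hr), fun h ℓ _ => by simp [h]⟩

end Algebra

end Module.Basis

section Graded

variable {K G A J : Type*} [Field K] [Group G] [DecidableEq G] [Ring A] [Algebra K A] [Fintype J]
  (deg : J → G) (e : Module.Basis J K A)

theorem forall_annihilated_eq_zero_iff_rank_eq_card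
    (h_mul : ∀ {g h : G} {a b : A}, a ∈ Submodule.span K (e '' {i | deg i = g}) →
      b ∈ Submodule.span K (e '' {i | deg i = h}) →
      a * b ∈ Submodule.span K (e '' {i | deg i = g * h}))
    (σ g : G) :
    (∀ a ∈ Submodule.span K (e '' {i | deg i = g}),
      (∀ b ∈ Submodule.span K (e '' {i | deg i = σ * g⁻¹}), b * a = 0) → a = 0) ↔
    (Matrix.of fun (p : {r : J // deg r = σ * g⁻¹} × {ℓ : J // deg ℓ = σ})
        (j : {j : J // deg j = g}) => e.repr (e p.1.1 * e j.1) p.2.1).rank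
      = Fintype.card {j : J // deg j = g} := by
  set ι := Fintype.linearCombination K fun j : {j : J // deg j = g} => e j
  have h_range : LinearMap.range ι = Submodule.span K (e '' {i | deg i = g}) := by
    rw [Fintype.range_linearCombination, Set.image_eq_range]
    rfl
  have h_inj : Function.Injective ι :=
    (e.linearIndependent.comp _ Subtype.val_injective).fintypeLinearCombination_injective
  have key : ∀ x, (Matrix.of fun (p : {r : J // deg r = σ * g⁻¹} × {ℓ : J // deg ℓ = σ})
      (j : {j : J // deg j = g}) => e.repr (e p.1.1 * e j.1) p.2.1) *ᵥ x = 0 ↔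
      ∀ b ∈ Submodule.span K (e '' {i | deg i = σ * g⁻¹}), b * ι x = 0 := by
    intro x
    rw [← e.forall_repr_mul_eq_zero_iff (L := {ℓ | deg ℓ = σ})]
    · simp only [funext_iff, Prod.forall, Subtype.forall, Pi.zero_apply, ι,
        Fintype.linearCombination_apply, e.repr_mul_sum_smul]
      rfl
    · intro r hr
      have h := h_mul (g := σ * g⁻¹) (h := g) (Submodule.subset_span (Set.mem_image_of_mem e hr))
        (h_range.le (LinearMap.mem_range_self ι x))
      rwa [inv_mul_cancel_right] at h
  rw [Matrix.rank_eq_card_iff_forall_mulVec_eq_zero, ← h_range]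
  simp only [LinearMap.mem_range, forall_exists_index, forall_apply_eq_imp_iff, key,
    map_eq_zero_iff ι h_inj]

end Graded

theorem stmt15_general (K : Type) [Field K] (G : Type) [Group G] [DecidableEq G]
    (A : Type) [Ring A] [Algebra K A] (𝒜 : G → Submodule K A)
    (h_mul : ∀ {g h : G} {a b : A}, a ∈ 𝒜 g → b ∈ 𝒜 h → a * b ∈ 𝒜 (g * h))
    (J : Type) [Fintype J]
    (deg : J → G) (e : Module.Basis J K A)
    (h𝒜 : ∀ g : G, 𝒜 g = Submodule.span K (e '' {i | deg i = g}))
    (σ : G)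
    (c : J → J → J → K) (hc : ∀ i j ℓ, c i j ℓ = e.repr (e i * e j) ℓ) :
    (∀ g : G, ∀ a ∈ 𝒜 g, (∀ b ∈ 𝒜 (σ * g⁻¹), b * a = 0) → a = 0) ↔
    (∀ g : G,
      (Matrix.of fun (p : {r : J // deg r = σ * g⁻¹} × {ℓ : J // deg ℓ = σ})
          (j : {j : J // deg j = g}) => c p.1.1 j.1 p.2.1).rank
        = Fintype.card {j : J // deg j = g}) := by
  simp only [h𝒜, hc] at h_mul ⊢
  exact forall_congr' (forall_annihilated_eq_zero_iff_rank_eq_card deg e h_mul σ)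

/-- **Proposition on σ-faithfulness.**  A finite-dimensional `G`-graded algebra `A` is
left σ-faithful (for all `g ∈ G` and `a ∈ A_g`, `A_{σg⁻¹}·a = 0` implies `a = 0`) if and
only if `rank C_g = |J_g|` for every `g ∈ G`. -/
theorem stmt15 (K : Type) [Field K] (G : Type) [Group G] [DecidableEq G]
    (A : Type) [Ring A] [Algebra K A] (𝒜 : G → Submodule K A)
    (h_one : (1 : A) ∈ 𝒜 1)
    (h_mul : ∀ {g h : G} {a b : A}, a ∈ 𝒜 g → b ∈ 𝒜 h → a * b ∈ 𝒜 (g * h))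
    (J : Type) [Fintype J] [DecidableEq J]
    (deg : J → G) (e : Module.Basis J K A)
    (h𝒜 : ∀ g : G, 𝒜 g = Submodule.span K (e '' {i | deg i = g}))
    (σ : G)
    (c : J → J → J → K) (hc : ∀ i j ℓ, c i j ℓ = e.repr (e i * e j) ℓ) :
    (∀ g : G, ∀ a ∈ 𝒜 g, (∀ b ∈ 𝒜 (σ * g⁻¹), b * a = 0) → a = 0) ↔
    (∀ g : G,
      (Matrix.of fun (p : {r : J // deg r = σ * g⁻¹} × {ℓ : J // deg ℓ = σ})
          (j : {j : J // deg j = g}) => c p.1.1 j.1 p.2.1).rank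
        = Fintype.card {j : J // deg j = g}) :=
  stmt15_general K G A 𝒜 h_mul J deg e h𝒜 σ c hc
end
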